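/- arXiv:2211.07054 — 8 statements merged into one kernel-verified Lean document; each statement's English description precedes it below -/
import Mathlib

section
/- The homomorphism H²(G/H, (T')^H) → ∏_{G'} H²(G'/(G'∩H), (T')^{G'∩H}), where the product runs over all cyclic subgroups G' of G and the component at G' is induced by the natural injection G'/(G'∩H) → G/H together with the inclusion (T')^H ⊆ (T')^{G'∩H}, is injective. -/
/-!
Write `Q = G/H` and `I = ℤ[G/H] ⊆ D'` for the image of `f'`. As a module over `Q`, and over every
`G'/(G' ∩ H)` (which acts freely on `G/H` through `quotMap`), `I` is coinduced, so it has no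
cohomology in degrees 2 and 3. Since moreover every preimage in `D'` of an `H`-fixed element of
`T'` is `H`-fixed (compare the `ℤ[G/H × G]`-components and sum over `G`), a 2-cocycle of `Q` with
values in `(T')^H` lifts to a 2-cocycle `F` with values in `(D')^H` whose restrictions to the groups
`G'/(G' ∩ H)` are coboundaries whenever those of the original cocycle are.

It remains to treat the permutation lattice `D' ≅ ℤ^Y`. Inflated to `G`, `F` is the coboundary of
an averaged rational cochain `β`, and `β` modulo `ℤ` is a 1-cocycle `u` with values in `(ℚ/ℤ)^Y`.
If `g` fixes `y`, the restriction to the cyclic group `⟨g⟩` shows `u(g)(y) = 0`; a 1-cocycle of a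
permutation module vanishing on stabilizers is a coboundary `dm` (Shapiro's lemma). Lifting `m`
to rational values makes `β - dm` integral, which exhibits `F` as a coboundary.
-/

namespace Normic

/-- For a `Γ`-set `α`, the permutation module of `M`-valued functions on `α`:
`Γ` acts by `(g • f) x = f (g⁻¹ • x)`.  For `M = ℤ` and a finite `Γ`-set `α` this is
the permutation lattice `ℤ[α]`. -/
instance funAction (Γ α M : Type*) [Group Γ] [MulAction Γ α] [AddCommGroup M] :
    DistribMulAction Γ (α → M) where
  smul g f := fun x => f (g⁻¹ • x)
  one_smul f := by funext x; show f _ = f x; rw [inv_one, one_smul]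
  mul_smul g h f := by funext x; show f _ = f _; rw [mul_inv_rev, mul_smul]
  smul_zero g := rfl
  smul_add g f₁ f₂ := rfl

lemma funAction_smul_apply {Γ α M : Type*} [Group Γ] [MulAction Γ α] [AddCommGroup M]
    (g : Γ) (f : α → M) (x : α) : (g • f) x = f (g⁻¹ • x) := rfl

section Cocycles

variable {Γ : Type*} [Group Γ] {M : Type*} [AddCommGroup M] [DistribMulAction Γ M]

/-- Inhomogeneous 1-cocycles of `Γ` with values in `M`. -/
def IsOneCocycle (f : Γ → M) : Prop := ∀ g h : Γ, f (g * h) = g • f h + f g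

/-- 1-coboundaries of `Γ` with values in `M`. -/
def IsOneCoboundary (f : Γ → M) : Prop := ∃ m : M, ∀ g : Γ, f g = g • m - m

/-- Inhomogeneous 2-cocycles of `Γ` with values in `M`. -/
def IsTwoCocycle (f : Γ → Γ → M) : Prop :=
  ∀ g h k : Γ, g • f h k - f (g * h) k + f g (h * k) - f g h = 0

/-- 2-coboundaries of `Γ` with values in `M`. -/
def IsTwoCoboundary (f : Γ → Γ → M) : Prop :=
  ∃ a : Γ → M, ∀ g h : Γ, f g h = g • a h - a (g * h) + a g

end Cocycles

section Fixed

variable {Γ : Type*} [Group Γ] (N : Subgroup Γ)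
variable (M : Type*) [AddCommGroup M] [DistribMulAction Γ M]

/-- The subgroup `M^N` of elements of `M` fixed by a subgroup `N` of `Γ`. -/
def fixedBy : AddSubgroup M where
  carrier := {m | ∀ γ ∈ N, γ • m = m}
  zero_mem' := fun γ _ => smul_zero γ
  add_mem' := by
    intro a b ha hb γ hγ
    rw [smul_add, ha γ hγ, hb γ hγ]
  neg_mem' := by
    intro a ha γ hγ
    rw [smul_neg, ha γ hγ]

variable [N.Normal]

/-- When `N` is normal in `Γ`, the quotient `Γ/N` acts on the fixed points `M^N`. -/
instance fixedBySMul : SMul (Γ ⧸ N) (fixedBy N M) :=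
  ⟨fun q m =>
    Quotient.liftOn' q
      (fun γ => (⟨γ • (m : M), by
        intro h hh
        have hconj : γ⁻¹ * h * γ ∈ N := by
          have := Subgroup.Normal.conj_mem ‹N.Normal› h hh γ⁻¹
          simpa using this
        calc h • γ • (m : M) = (h * γ) • (m : M) := (mul_smul _ _ _).symm
        _ = (γ * (γ⁻¹ * h * γ)) • (m : M) := by group
        _ = γ • ((γ⁻¹ * h * γ) • (m : M)) := mul_smul _ _ _
        _ = γ • (m : M) := by rw [m.2 _ hconj]⟩ : fixedBy N M))
      (by
        intro γ γ' hrel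
        have h : γ⁻¹ * γ' ∈ N := QuotientGroup.leftRel_apply.mp hrel
        apply Subtype.ext
        show γ • (m : M) = γ' • (m : M)
        calc γ • (m : M) = γ • ((γ⁻¹ * γ') • (m : M)) := by rw [m.2 _ h]
        _ = (γ * (γ⁻¹ * γ')) • (m : M) := (mul_smul _ _ _).symm
        _ = γ' • (m : M) := by group)⟩

lemma fixedBy_mk_smul (γ : Γ) (m : fixedBy N M) :
    (((QuotientGroup.mk γ : Γ ⧸ N) • m : fixedBy N M) : M) = γ • (m : M) := rfl

/-- The induced action of the quotient group `Γ/N` on the fixed points `M^N`. -/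
instance fixedByAction : DistribMulAction (Γ ⧸ N) (fixedBy N M) where
  one_smul m := by
    apply Subtype.ext
    show (1 : Γ) • (m : M) = (m : M)
    rw [one_smul]
  mul_smul q q' m := by
    induction q using QuotientGroup.induction_on with
    | H γ =>
    induction q' using QuotientGroup.induction_on with
    | H γ' =>
    apply Subtype.ext
    show (γ * γ') • (m : M) = γ • γ' • (m : M)
    rw [mul_smul]
  smul_zero q := by
    induction q using QuotientGroup.induction_on with
    | H γ =>
    apply Subtype.ext
    show γ • (0 : M) = (0 : M)
    rw [smul_zero]
  smul_add q m m' := by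
    induction q using QuotientGroup.induction_on with
    | H γ =>
    apply Subtype.ext
    show γ • ((m : M) + (m' : M)) = γ • (m : M) + γ • (m' : M)
    rw [smul_add]

end Fixed

section ContextA

variable (G : Type*) [Group G] [Fintype G] [DecidableEq G] (H : Subgroup G) (l : ℕ)

/-- `e' = gcd(n, m)`, where `n = #G` and `m = l·[G:H]` is the degree of `P(t)`. -/
noncomputable def ePrime : ℕ := Nat.gcd (Fintype.card G) (l * H.index)

/-- The `G`-set `Ω` of all subsets of `Z_K = G` of cardinality `e'`, with `G` acting by
left translation of subsets. -/
def Om : Type _ := {s : Finset G // s.card = ePrime G H l}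

instance : MulAction G (Om G H l) where
  smul g s := ⟨s.1.image (g * ·), by
    rw [Finset.card_image_of_injective _ (mul_right_injective g)]; exact s.2⟩
  one_smul s := Subtype.ext (by
    show Finset.image ((1 : G) * ·) s.1 = s.1
    simp)
  mul_smul g h s := Subtype.ext (by
    show Finset.image _ _ = Finset.image _ (Finset.image _ _)
    rw [Finset.image_image]
    exact Finset.image_congr (fun x _ => by simp [Function.comp, mul_assoc]))

/-- The `G`-lattice `D' = (ℤ[G/H] ⊗ ℤ[G]) ⊕ ℤ[G] ⊕ ℤ[Ω]`, realized concretely as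
integer-valued functions (`ℤ[G/H] ⊗ ℤ[G]` is the permutation lattice on `G/H × G`, with
the diagonal `G`-action on the tensor factor). -/
abbrev Dp : Type _ := (((G ⧸ H) × G) → ℤ) × ((G → ℤ) × (Om G H l → ℤ))

/-- The injective `G`-equivariant map `f' : ℤ[G/H] → D'`, sending a coset `τ` to
`(τ ⊗ N_G, −l·N_G, −l·S_K)`, where `N_G = Σ_{g∈G} g` and `S_K = Σ_{M∈Ω} M`. -/
noncomputable def fp : ((G ⧸ H) → ℤ) →+ Dp G H l :=
  AddMonoidHom.mk' (fun x =>
    (fun p => x p.1,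
     fun _ => -(l : ℤ) * ∑ᶠ τ, x τ,
     fun _ => -(l : ℤ) * ∑ᶠ τ, x τ)) (by
    intro x y
    have hsum : ∑ᶠ τ, (x τ + y τ) = (∑ᶠ τ, x τ) + ∑ᶠ τ, y τ :=
      finsum_add_distrib (Set.toFinite _) (Set.toFinite _)
    refine Prod.ext ?_ (Prod.ext ?_ ?_) <;> funext p <;>
      simp [hsum] <;> ring)

lemma fp_apply (x : (G ⧸ H) → ℤ) :
    fp G H l x =
      (fun p => x p.1,
       fun _ => -(l : ℤ) * ∑ᶠ τ, x τ,
       fun _ => -(l : ℤ) * ∑ᶠ τ, x τ) := rfl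

lemma fp_equivariant (g : G) (x : (G ⧸ H) → ℤ) :
    fp G H l (g • x) = g • fp G H l x := by
  have hre : ∑ᶠ τ, x (g⁻¹ • τ) = ∑ᶠ τ, x τ :=
    finsum_eq_of_bijective (fun τ => g⁻¹ • τ) (MulAction.bijective g⁻¹) (fun τ => rfl)
  refine Prod.ext ?_ (Prod.ext ?_ ?_) <;> funext p <;>
    simp only [fp_apply, funAction_smul_apply, Prod.smul_fst, Prod.smul_snd, hre]

/-- The `G`-lattice `T'`, defined as the cokernel of `f' : ℤ[G/H] → D'`. -/
noncomputable abbrev Tp := Dp G H l ⧸ (fp G H l).range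

noncomputable instance : SMul G (Tp G H l) :=
  ⟨fun g => QuotientAddGroup.map _ _ (DistribMulAction.toAddMonoidHom (Dp G H l) g) (by
    rintro _ ⟨x, rfl⟩
    exact ⟨g • x, (fp_equivariant G H l g x)⟩)⟩

lemma Tp_smul_mk (g : G) (d : Dp G H l) :
    g • (QuotientAddGroup.mk d : Tp G H l) = QuotientAddGroup.mk (g • d) := rfl

/-- The `G`-action on the cokernel `T'`. -/
noncomputable instance : DistribMulAction G (Tp G H l) where
  one_smul x := by
    induction x using QuotientAddGroup.induction_on with
    | H d => rw [Tp_smul_mk, one_smul]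
  mul_smul g g' x := by
    induction x using QuotientAddGroup.induction_on with
    | H d => rw [Tp_smul_mk, Tp_smul_mk, Tp_smul_mk, mul_smul]
  smul_zero g :=
    map_zero (QuotientAddGroup.map _ _ (DistribMulAction.toAddMonoidHom (Dp G H l) g) _)
  smul_add g x y :=
    map_add (QuotientAddGroup.map _ _ (DistribMulAction.toAddMonoidHom (Dp G H l) g) _) x y

end ContextA

section Stmt1

variable {G : Type*} [Group G] [Fintype G] [DecidableEq G] (H : Subgroup G) (l : ℕ)

/-- If `H` is normal in `G` and `G'` is any subgroup, then `H' = G' ∩ H` is a normal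
subgroup of `G'`. -/
instance inf_subgroupOf_normal [H.Normal] (G' : Subgroup G) :
    ((G' ⊓ H).subgroupOf G').Normal where
  conj_mem := by
    intro x hx g
    rw [Subgroup.mem_subgroupOf] at hx ⊢
    rcases Subgroup.mem_inf.mp hx with ⟨hx1, hx2⟩
    refine Subgroup.mem_inf.mpr ⟨?_, ?_⟩
    · exact (g * x * g⁻¹).2
    · have : ((g : G) * (x : G) * (g : G)⁻¹) ∈ H := ‹H.Normal›.conj_mem _ hx2 (g : G)
      simpa using this

/-- The natural injection `G'/(G' ∩ H) → G/H` induced by the inclusion `G' ⊆ G`. -/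
noncomputable def quotMap [H.Normal] (G' : Subgroup G) :
    (↥G' ⧸ (G' ⊓ H).subgroupOf G') →* G ⧸ H :=
  QuotientGroup.map _ _ G'.subtype (by
    intro x hx
    rw [Subgroup.mem_subgroupOf] at hx
    exact Subgroup.mem_comap.mpr (Subgroup.mem_inf.mp hx).2)

/-- The inclusion `(T')^H ⊆ (T')^{G' ∩ H}` of fixed points. -/
def fixedInc (G' : Subgroup G) (x : fixedBy H (Tp G H l)) :
    fixedBy ((G' ⊓ H).subgroupOf G') (Tp G H l) :=
  ⟨(x : Tp G H l), by
    intro γ hγ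
    rw [Subgroup.mem_subgroupOf] at hγ
    rw [Subgroup.smul_def]
    exact x.2 _ (Subgroup.mem_inf.mp hγ).2⟩

end Stmt1

section Cochains

variable {Γ : Type*} [Group Γ] {M N : Type*} [AddCommGroup M] [DistribMulAction Γ M]
  [AddCommGroup N] [DistribMulAction Γ N]

def dOne (B : Γ → M) (a b : Γ) : M := a • B b - B (a * b) + B a

def dTwo (F : Γ → Γ → M) (a b c : Γ) : M := a • F b c - F (a * b) c + F a (b * c) - F a b

def IsThreeCocycle (w : Γ → Γ → Γ → M) : Prop :=
  ∀ a b c d : Γ, a • w b c d - w (a * b) c d + w a (b * c) d - w a b (c * d) + w a b c = 0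

def IsThreeCoboundary (w : Γ → Γ → Γ → M) : Prop := ∃ η : Γ → Γ → M, w = dTwo η

lemma isOneCocycle_iff (f : Γ → M) : IsOneCocycle f ↔ dOne f = 0 := by
  simp only [IsOneCocycle, dOne, funext_iff, Pi.zero_apply, sub_add_eq_add_sub, sub_eq_zero]
  exact forall₂_congr fun _ _ => eq_comm

lemma isTwoCocycle_iff (F : Γ → Γ → M) : IsTwoCocycle F ↔ dTwo F = 0 := by
  simp only [funext_iff]
  rfl

lemma isTwoCoboundary_iff (F : Γ → Γ → M) : IsTwoCoboundary F ↔ ∃ B : Γ → M, F = dOne B := by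
  simp only [funext_iff]
  rfl

lemma dOne_smul_sub (m : M) : dOne (fun g : Γ => g • m - m) = 0 := by
  funext a b
  simp only [dOne, smul_sub, mul_smul, Pi.zero_apply]
  abel

lemma dTwo_dOne (B : Γ → M) : dTwo (dOne B) = 0 := by
  funext a b c
  simp only [dTwo, dOne, smul_sub, smul_add, mul_smul, mul_assoc, Pi.zero_apply]
  abel

lemma isThreeCocycle_dTwo (F : Γ → Γ → M) : IsThreeCocycle (dTwo F) := by
  intro a b c d
  simp only [dTwo, smul_sub, smul_add, mul_smul, mul_assoc]
  abel

lemma dOne_add (B C : Γ → M) : dOne (B + C) = dOne B + dOne C := by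
  funext a b
  simp only [dOne, Pi.add_apply, smul_add]
  abel

lemma dOne_sub (B C : Γ → M) : dOne (B - C) = dOne B - dOne C := by
  funext a b
  simp only [dOne, Pi.sub_apply, smul_sub]
  abel

lemma dTwo_sub (F F' : Γ → Γ → M) : dTwo (F - F') = dTwo F - dTwo F' := by
  funext a b c
  simp only [dTwo, Pi.sub_apply, smul_sub]
  abel

lemma dOne_comp (φ : M →+ N) (hφ : ∀ (g : Γ) (m : M), φ (g • m) = g • φ m) (B : Γ → M) :
    dOne (fun a => φ (B a)) = fun a b => φ (dOne B a b) := by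
  funext a b
  simp [dOne, hφ]

lemma dTwo_comp (φ : M →+ N) (hφ : ∀ (g : Γ) (m : M), φ (g • m) = g • φ m) (F : Γ → Γ → M) :
    dTwo (fun a b => φ (F a b)) = fun a b c => φ (dTwo F a b c) := by
  funext a b c
  simp [dTwo, hφ]

lemma IsTwoCocycle.map {F : Γ → Γ → M} (hF : IsTwoCocycle F) (φ : M →+ N)
    (hφ : ∀ (g : Γ) (m : M), φ (g • m) = g • φ m) : IsTwoCocycle fun a b => φ (F a b) :=
  fun a b c => by simpa [hφ] using congrArg φ (hF a b c)

lemma IsTwoCoboundary.map {F : Γ → Γ → M} (hF : IsTwoCoboundary F) (φ : M →+ N)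
    (hφ : ∀ (g : Γ) (m : M), φ (g • m) = g • φ m) : IsTwoCoboundary fun a b => φ (F a b) := by
  obtain ⟨B, rfl⟩ := (isTwoCoboundary_iff F).1 hF
  exact (isTwoCoboundary_iff _).2 ⟨fun a => φ (B a), (dOne_comp φ hφ B).symm⟩

end Cochains

section ShortExact

variable {Γ : Type*} [Group Γ] {I M N : Type*} [AddCommGroup I] [DistribMulAction Γ I]
  [AddCommGroup M] [DistribMulAction Γ M] [AddCommGroup N] [DistribMulAction Γ N]
  {ι : I →+ M} {π : M →+ N}

lemma exists_isTwoCocycle_lift (hι : ∀ (g : Γ) (x : I), ι (g • x) = g • ι x)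
    (hπ : ∀ (g : Γ) (m : M), π (g • m) = g • π m) (hιinj : Function.Injective ι)
    (hexact : Function.Exact ι π) (hπsurj : Function.Surjective π)
    (hI : ∀ w : Γ → Γ → Γ → I, IsThreeCocycle w → IsThreeCoboundary w)
    {f : Γ → Γ → N} (hf : IsTwoCocycle f) :
    ∃ F : Γ → Γ → M, IsTwoCocycle F ∧ ∀ a b, π (F a b) = f a b := by
  choose F₀ hF₀ using fun a b => hπsurj (f a b)
  have hω : ∀ a b c, dTwo F₀ a b c ∈ Set.range ι := fun a b c => (hexact _).1 (by
    rw [← congrFun₃ (dTwo_comp π hπ F₀) a b c]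
    simp only [hF₀]
    exact hf a b c)
  choose W hW using hω
  have hWco : IsThreeCocycle W := fun a b c d => hιinj (by
    simpa only [map_add, map_sub, hι, hW, map_zero] using isThreeCocycle_dTwo F₀ a b c d)
  obtain ⟨η, rfl⟩ := hI W hWco
  refine ⟨F₀ - fun a b => ι (η a b), ?_, fun a b => ?_⟩
  · rw [isTwoCocycle_iff, dTwo_sub, dTwo_comp ι hι]
    funext a b c
    simp [hW]
  · rw [Pi.sub_apply, Pi.sub_apply, map_sub, hF₀, hexact.apply_apply_eq_zero, sub_zero]

lemma IsTwoCocycle.isTwoCoboundary_of_comp (hι : ∀ (g : Γ) (x : I), ι (g • x) = g • ι x)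
    (hπ : ∀ (g : Γ) (m : M), π (g • m) = g • π m) (hιinj : Function.Injective ι)
    (hexact : Function.Exact ι π) (hπsurj : Function.Surjective π)
    (hI : ∀ w : Γ → Γ → I, IsTwoCocycle w → IsTwoCoboundary w)
    {F : Γ → Γ → M} (hF : IsTwoCocycle F) (hπF : IsTwoCoboundary fun a b => π (F a b)) :
    IsTwoCoboundary F := by
  obtain ⟨A, hA⟩ := (isTwoCoboundary_iff _).1 hπF
  choose Ā hĀ using fun a => hπsurj (A a)
  have hV : ∀ a b, F a b - dOne Ā a b ∈ Set.range ι := fun a b => (hexact _).1 (by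
    rw [map_sub, ← congrFun₂ (dOne_comp π hπ Ā) a b, congrFun₂ hA a b]
    simp [hĀ])
  choose W hW using hV
  have hWco : IsTwoCocycle W := fun a b c => hιinj (by
    have h := congrFun₃ (dTwo_comp ι hι W) a b c
    rw [show (fun a b => ι (W a b)) = F - dOne Ā from funext₂ hW, dTwo_sub,
      (isTwoCocycle_iff F).1 hF, dTwo_dOne, sub_zero] at h
    rw [map_zero]
    exact h.symm)
  obtain ⟨ξ, rfl⟩ := (isTwoCoboundary_iff _).1 (hI W hWco)
  refine (isTwoCoboundary_iff _).2 ⟨Ā + fun a => ι (ξ a), ?_⟩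
  rw [dOne_add, dOne_comp ι hι]
  funext a b
  simp [hW]

end ShortExact

section PermutationModules

variable {Γ X : Type*} [Group Γ] [MulAction Γ X]

lemma exists_orbit_section : ∃ r : X → X, ∃ c : X → Γ,
    (∀ (g : Γ) (x : X), r (g • x) = r x) ∧ ∀ x, c x • r x = x := by
  let r : X → X := fun x => (Quotient.mk (MulAction.orbitRel Γ X) x).out
  have hr : ∀ x, ∃ c : Γ, c • r x = x := fun x => MulAction.mem_orbit_iff.mp
    (MulAction.mem_orbit_symm.mp (MulAction.orbitRel_apply.mp (Quotient.exact (Quotient.out_eq _))))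
  choose c hc using hr
  exact ⟨r, c, fun g x => congrArg (Quotient.out (s := MulAction.orbitRel Γ X))
    (Quotient.sound (MulAction.orbitRel_apply.mpr (MulAction.mem_orbit x g))), hc⟩

lemma exists_equivariant_section_of_free (hfree : ∀ (g : Γ) (x : X), g • x = x → g = 1) :
    ∃ r : X → X, ∃ τ : X → Γ, (∀ (g : Γ) (x : X), r (g • x) = r x) ∧
      (∀ (g : Γ) (x : X), τ (g • x) = g * τ x) ∧ ∀ x, τ x • r x = x := by
  obtain ⟨r, τ, hr, hτ⟩ := exists_orbit_section (Γ := Γ) (X := X)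
  refine ⟨r, τ, hr, fun g x => ?_, hτ⟩
  have hfix : ((g * τ x)⁻¹ * τ (g • x)) • r x = r x := by
    rw [mul_smul, ← hr g x, hτ, mul_inv_rev, mul_smul, inv_smul_smul, hr g x]
    exact inv_smul_eq_iff.mpr (hτ x).symm
  exact (inv_mul_eq_one.mp (hfree _ _ hfix)).symm

variable {A : Type*} [AddCommGroup A]

lemma isTwoCoboundary_of_free (hfree : ∀ (g : Γ) (x : X), g • x = x → g = 1)
    (w : Γ → Γ → X → A) (hw : IsTwoCocycle w) : IsTwoCoboundary w := by
  obtain ⟨r, τ, hr, hτ, hx⟩ := exists_equivariant_section_of_free hfree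
  refine ⟨fun c x => w (τ x)⁻¹ c (r x), fun a b => funext fun x => ?_⟩
  have h := congrFun (hw (τ x)⁻¹ a b) (r x)
  simp only [Pi.add_apply, Pi.sub_apply, funAction_smul_apply, inv_inv, hx,
    Pi.zero_apply] at h
  simp only [Pi.add_apply, Pi.sub_apply, funAction_smul_apply, hτ, hr, mul_inv_rev, inv_inv]
  rw [← sub_eq_zero, ← h]
  abel

lemma isThreeCoboundary_of_free (hfree : ∀ (g : Γ) (x : X), g • x = x → g = 1)
    (w : Γ → Γ → Γ → X → A) (hw : IsThreeCocycle w) : IsThreeCoboundary w := by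
  obtain ⟨r, τ, hr, hτ, hx⟩ := exists_equivariant_section_of_free hfree
  refine ⟨fun b c x => w (τ x)⁻¹ b c (r x), funext fun a => funext fun b => funext fun c =>
    funext fun x => ?_⟩
  have h := congrFun (hw (τ x)⁻¹ a b c) (r x)
  simp only [Pi.add_apply, Pi.sub_apply, funAction_smul_apply, inv_inv, hx,
    Pi.zero_apply] at h
  simp only [dTwo, Pi.add_apply, Pi.sub_apply, funAction_smul_apply, hτ, hr, mul_inv_rev, inv_inv]
  rw [← sub_eq_zero, ← h]
  abel

variable {u : Γ → X → A}

lemma IsOneCocycle.apply_eq_of_inv_smul_eq (hu : IsOneCocycle u)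
    (hstab : ∀ (g : Γ) (x : X), g • x = x → u g x = 0) {g g' : Γ} {x : X}
    (h : g⁻¹ • x = g'⁻¹ • x) : u g x = u g' x := by
  have hfix : (g'⁻¹ * g) • g'⁻¹ • x = g'⁻¹ • x := by
    rw [mul_smul, ← h, smul_inv_smul, h]
  have := congrFun (hu g' (g'⁻¹ * g)) x
  rw [mul_inv_cancel_left, Pi.add_apply, funAction_smul_apply, hstab _ _ hfix, zero_add] at this
  exact this

/-- Shapiro's lemma in degree one for the permutation module `A^X`. -/
lemma IsOneCocycle.isOneCoboundary_of_stabilizer (hu : IsOneCocycle u)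
    (hstab : ∀ (g : Γ) (x : X), g • x = x → u g x = 0) : IsOneCoboundary u := by
  obtain ⟨r, c, hr, hc⟩ := exists_orbit_section (Γ := Γ) (X := X)
  have hc' : ∀ x, (c x)⁻¹ • x = r x := fun x => inv_smul_eq_iff.mpr (hc x).symm
  refine ⟨fun x => -u (c x) x, fun g => funext fun x => ?_⟩
  have hsplit := congrFun (hu g (g⁻¹ * c x)) x
  rw [mul_inv_cancel_left, Pi.add_apply, funAction_smul_apply] at hsplit
  have hrep : u (g⁻¹ * c x) (g⁻¹ • x) = u (c (g⁻¹ • x)) (g⁻¹ • x) :=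
    hu.apply_eq_of_inv_smul_eq hstab (by
      rw [mul_inv_rev, inv_inv, mul_smul, smul_inv_smul, hc', hc', hr])
  rw [Pi.sub_apply, funAction_smul_apply, hsplit, hrep]
  abel

end PermutationModules

section FixedPoints

variable {Γ : Type*} [Group Γ] {M N : Type*} [AddCommGroup M] [DistribMulAction Γ M]
  [AddCommGroup N] [DistribMulAction Γ N] (K : Subgroup Γ)

def fixedByMap (φ : M →+ N) (hφ : ∀ (g : Γ) (m : M), φ (g • m) = g • φ m) :
    fixedBy K M →+ fixedBy K N :=
  (φ.comp (fixedBy K M).subtype).codRestrict _ fun m g hg => by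
    simp [← hφ, m.2 g hg]

@[simp]
lemma coe_fixedByMap (φ : M →+ N) (hφ : ∀ (g : Γ) (m : M), φ (g • m) = g • φ m)
    (m : fixedBy K M) : (fixedByMap K φ hφ m : N) = φ m :=
  rfl

lemma fixedByMap_smul [K.Normal] (φ : M →+ N) (hφ : ∀ (g : Γ) (m : M), φ (g • m) = g • φ m)
    (q : Γ ⧸ K) (m : fixedBy K M) : fixedByMap K φ hφ (q • m) = q • fixedByMap K φ hφ m := by
  induction q using QuotientGroup.induction_on with
  | H g => exact Subtype.ext (hφ g m)

variable {K} [K.Normal]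

lemma IsTwoCocycle.inflate {F : Γ ⧸ K → Γ ⧸ K → fixedBy K M} (hF : IsTwoCocycle F) :
    IsTwoCocycle fun a b : Γ => (F a b : M) := fun a b c => by
  simpa [← QuotientGroup.mk_mul, fixedBy_mk_smul] using congrArg Subtype.val (hF a b c)

lemma IsTwoCoboundary.inflate {F : Γ ⧸ K → Γ ⧸ K → fixedBy K M} (hF : IsTwoCoboundary F) :
    IsTwoCoboundary fun a b : Γ => (F a b : M) := by
  obtain ⟨B, hB⟩ := hF
  exact ⟨fun a => B a, fun a b => by
    simpa [← QuotientGroup.mk_mul, fixedBy_mk_smul] using congrArg Subtype.val (hB a b)⟩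

lemma isTwoCoboundary_of_inflate {F : Γ ⧸ K → Γ ⧸ K → fixedBy K M} (c : Γ → M)
    (hcK : ∀ a, c a ∈ fixedBy K M) (hcQ : ∀ a, ∀ k ∈ K, c (a * k) = c a)
    (hc : ∀ a b : Γ, (F a b : M) = dOne c a b) : IsTwoCoboundary F := by
  let C : Γ ⧸ K → fixedBy K M := fun q => Quotient.liftOn' q (fun a => ⟨c a, hcK a⟩)
    fun a b hab => Subtype.ext (by
      simpa using (hcQ a _ (QuotientGroup.leftRel_apply.mp hab)).symm)
  refine ⟨C, fun q r => ?_⟩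
  induction q using QuotientGroup.induction_on with | H a =>
  induction r using QuotientGroup.induction_on with | H b =>
  refine Subtype.ext ?_
  simp only [AddSubgroup.coe_add, AddSubgroup.coe_sub, fixedBy_mk_smul, ← QuotientGroup.mk_mul]
  exact hc a b

end FixedPoints

section Restriction

variable {G : Type*} [Group G] (H G' : Subgroup G) {M : Type*} [AddCommGroup M]
  [DistribMulAction G M]

def fixedByRes : fixedBy H M →+ fixedBy ((G' ⊓ H).subgroupOf G') M :=
  (fixedBy H M).subtype.codRestrict _ fun m κ hκ =>
    m.2 κ (Subgroup.mem_inf.mp (Subgroup.mem_subgroupOf.mp hκ)).2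

@[simp]
lemma coe_fixedByRes (m : fixedBy H M) : (fixedByRes H G' m : M) = m := rfl

variable [H.Normal]

lemma quotMap_mk (κ : G') :
    quotMap H G' (κ : ↥G' ⧸ (G' ⊓ H).subgroupOf G') = ((κ : G) : G ⧸ H) :=
  rfl

lemma quotMap_injective : Function.Injective (quotMap H G') := by
  refine (injective_iff_map_eq_one _).mpr fun q hq => ?_
  induction q using QuotientGroup.induction_on with | H κ =>
  rw [quotMap_mk, QuotientGroup.eq_one_iff] at hq
  exact (QuotientGroup.eq_one_iff κ).mpr
    (Subgroup.mem_subgroupOf.mpr (Subgroup.mem_inf.mpr ⟨κ.2, hq⟩))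

lemma IsTwoCocycle.restrict {F : G ⧸ H → G ⧸ H → fixedBy H M} (hF : IsTwoCocycle F) :
    IsTwoCocycle fun a b : ↥G' ⧸ (G' ⊓ H).subgroupOf G' =>
      fixedByRes H G' (F (quotMap H G' a) (quotMap H G' b)) := fun a b c => by
  induction a using QuotientGroup.induction_on with | H κ =>
  induction b using QuotientGroup.induction_on with | H κ' =>
  induction c using QuotientGroup.induction_on with | H κ'' =>
  refine Subtype.ext ?_
  simpa [← QuotientGroup.mk_mul, fixedBy_mk_smul, quotMap_mk, Subgroup.smul_def] using
    congrArg Subtype.val (hF κ κ' κ'')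

end Restriction

section RationalCoefficients

variable {Γ : Type*} [Group Γ] [Fintype Γ]

lemma sum_mul_left {N : Type*} [AddCommMonoid N] (g : Γ) (f : Γ → N) :
    ∑ h, f (g * h) = ∑ h, f h :=
  Equiv.sum_comp (Equiv.mulLeft g) f

variable {M : Type*} [AddCommGroup M] [Module ℚ M]

lemma inv_card_smul_card_nsmul (m : M) : (Fintype.card Γ : ℚ)⁻¹ • Fintype.card Γ • m = m := by
  rw [← Nat.cast_smul_eq_nsmul ℚ, inv_smul_smul₀ (Nat.cast_ne_zero.mpr Fintype.card_ne_zero)]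

variable [DistribMulAction Γ M]

def averageCochain (F : Γ → Γ → M) (a : Γ) : M := (Fintype.card Γ : ℚ)⁻¹ • ∑ c, F a c

lemma IsTwoCocycle.eq_dOne_averageCochain {F : Γ → Γ → M} (hF : IsTwoCocycle F) :
    F = dOne (averageCochain F) := by
  funext a b
  have hsum : ∑ c, (a • F b c - F (a * b) c + F a (b * c) - F a b) = 0 :=
    Finset.sum_eq_zero fun c _ => hF a b c
  rw [Finset.sum_sub_distrib, Finset.sum_add_distrib, Finset.sum_sub_distrib, ← Finset.smul_sum,
    sum_mul_left b (F a), Finset.sum_const, Finset.card_univ, sub_eq_zero] at hsum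
  simp only [dOne, averageCochain, ← inv_natCast_smul_comm, ← smul_sub, ← smul_add, hsum,
    inv_card_smul_card_nsmul]

lemma IsOneCocycle.isOneCoboundary {f : Γ → M} (hf : IsOneCocycle f) : IsOneCoboundary f := by
  refine ⟨-((Fintype.card Γ : ℚ)⁻¹ • ∑ h, f h), fun g => ?_⟩
  have hsum : ∑ h, f (g * h) = ∑ h, (g • f h + f g) := Finset.sum_congr rfl fun h _ => hf g h
  rw [sum_mul_left g f, Finset.sum_add_distrib, ← Finset.smul_sum,
    Finset.sum_const, Finset.card_univ, ← sub_eq_iff_eq_add'] at hsum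
  rw [smul_neg, ← inv_natCast_smul_comm, neg_sub_neg, ← smul_sub, hsum, inv_card_smul_card_nsmul]

end RationalCoefficients

section CyclicDetection

variable {G : Type*} [Group G] {Y : Type*} [MulAction G Y]

lemma compLeft_smul {A B : Type*} [AddCommGroup A] [AddCommGroup B] (φ : A →+ B) (g : G)
    (f : Y → A) : φ.compLeft Y (g • f) = g • φ.compLeft Y f :=
  rfl

lemma intCast_compLeft_injective : Function.Injective ((Int.castAddHom ℚ).compLeft Y) :=
  fun _ _ h => funext fun y => Int.cast_injective (congrFun h y)

lemma averageCochain_mem_fixedBy [Fintype G] (H : Subgroup G) {F : G → G → Y → ℚ}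
    (hF : ∀ a b, F a b ∈ fixedBy H (Y → ℚ)) (a : G) : averageCochain F a ∈ fixedBy H (Y → ℚ) :=
  fun h hh => by
    simp only [averageCochain, ← inv_natCast_smul_comm, Finset.smul_sum, hF _ _ h hh]

/-- Over `ℚ`, the restriction of `Φ = dβ` to `⟨g⟩` is also the coboundary of an integral
cochain `B`; `β - B` is then a rational 1-cocycle of `⟨g⟩`, hence a coboundary, hence zero at
`(g, y)` whenever `g` fixes `y`. -/
lemma exists_intCast_eq_of_smul_eq [Finite G] {Φ : G → G → Y → ℤ} {β : G → Y → ℚ}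
    (hβ : ∀ a b, (Int.castAddHom ℚ).compLeft Y (Φ a b) = dOne β a b) {g : G}
    (hg : IsTwoCoboundary fun κ κ' : Subgroup.zpowers g => Φ κ κ') {y : Y} (hy : g • y = y) :
    ∃ k : ℤ, (k : ℚ) = β g y := by
  have : Fintype (Subgroup.zpowers g) := Fintype.ofFinite _
  obtain ⟨B, hB⟩ := (isTwoCoboundary_iff _).1 hg
  let v : Subgroup.zpowers g → Y → ℚ := fun κ => β κ - (Int.castAddHom ℚ).compLeft Y (B κ)
  have hv : IsOneCocycle v := by
    rw [isOneCocycle_iff, show v = (fun κ : Subgroup.zpowers g => β κ) -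
        fun κ => (Int.castAddHom ℚ).compLeft Y (B κ) from rfl, dOne_sub,
      dOne_comp _ fun _ _ => compLeft_smul _ _ _]
    funext κ κ'
    rw [Pi.sub_apply, Pi.sub_apply, ← congrFun₂ hB κ κ', hβ]
    exact sub_self _
  obtain ⟨p, hp⟩ := hv.isOneCoboundary
  refine ⟨B ⟨g, Subgroup.mem_zpowers g⟩ y, ?_⟩
  have hpy := congrFun (hp ⟨g, Subgroup.mem_zpowers g⟩) y
  rw [Pi.sub_apply, Subgroup.smul_def, funAction_smul_apply, inv_smul_eq_iff.mpr hy.symm,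
    sub_self] at hpy
  exact (sub_eq_zero.mp hpy).symm

/-- Lifting each value of the `H`-invariant `m` gives an `H`-invariant `m'`, and `β - dm'` is
integral. -/
lemma exists_intCast_dOne_eq (H : Subgroup G) [H.Normal] {β : G → Y → ℚ}
    (hβQ : ∀ a, ∀ h ∈ H, β (a * h) = β a) (hβH : ∀ a, β a ∈ fixedBy H (Y → ℚ))
    {m : Y → ℚ ⧸ (Int.castAddHom ℚ).range}
    (hm : ∀ a, (QuotientAddGroup.mk' _).compLeft Y (β a) = a • m - m) :
    ∃ c : G → Y → ℤ, (∀ a, c a ∈ fixedBy H (Y → ℤ)) ∧ (∀ a, ∀ h ∈ H, c (a * h) = c a) ∧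
      ∀ a b, (Int.castAddHom ℚ).compLeft Y (dOne c a b) = dOne β a b := by
  have hmH : ∀ h ∈ H, h • m = m := fun h hh => by
    rw [← sub_eq_zero, ← hm, ← one_mul h, hβQ 1 h hh, hm, one_smul, sub_self]
  let m' : Y → ℚ := fun y => (m y).out
  have hm'H : ∀ h ∈ H, h • m' = m' := fun h hh => funext fun y => by
    show (m (h⁻¹ • y)).out = (m y).out
    rw [← funAction_smul_apply h m, hmH h hh]
  have hint : ∀ a y, ∃ k : ℤ, (k : ℚ) = (β a - (a • m' - m')) y := fun a y => by
    have hy := congrFun (hm a) y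
    simp only [AddMonoidHom.compLeft_apply, Function.comp_apply, Pi.sub_apply,
      funAction_smul_apply] at hy
    have h0 : QuotientAddGroup.mk' (Int.castAddHom ℚ).range
        ((β a - (a • m' - m')) y) = 0 := by
      simp only [Pi.sub_apply, funAction_smul_apply, map_sub, hy, m', QuotientAddGroup.mk'_apply,
        QuotientAddGroup.out_eq', sub_self]
    obtain ⟨k, hk⟩ := (QuotientAddGroup.eq_zero_iff _).mp h0
    exact ⟨k, hk⟩
  choose c hc using hint
  have hcast : ∀ a, (Int.castAddHom ℚ).compLeft Y (c a) = β a - (a • m' - m') :=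
    fun a => funext (hc a)
  refine ⟨c, fun a h hh => ?_, fun a h hh => ?_, fun a b => ?_⟩
  · have hconj : a⁻¹ * h * a ∈ H := by simpa using ‹H.Normal›.conj_mem h hh a⁻¹
    apply intCast_compLeft_injective
    rw [compLeft_smul, hcast, smul_sub, smul_sub, hβH a h hh, hm'H h hh, ← mul_smul,
      show h * a = a * (a⁻¹ * h * a) by group, mul_smul, hm'H _ hconj]
  · apply intCast_compLeft_injective
    rw [hcast, hcast, hβQ a h hh, mul_smul, hm'H h hh]
  · rw [← congrFun₂ (dOne_comp _ (compLeft_smul _) c) a b,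
      show (fun a => (Int.castAddHom ℚ).compLeft Y (c a)) = β - fun a => a • m' - m' from
        funext hcast,
      dOne_sub, dOne_smul_sub, sub_zero]

theorem exists_dOne_eq_of_isTwoCoboundary_zpowers [Fintype G] (H : Subgroup G) [H.Normal]
    {Φ : G → G → Y → ℤ} (hΦ : IsTwoCocycle Φ) (hΦH : ∀ a b, Φ a b ∈ fixedBy H (Y → ℤ))
    (hΦQ : ∀ a b, ∀ h ∈ H, Φ (a * h) b = Φ a b)
    (hcyc : ∀ g : G, IsTwoCoboundary fun κ κ' : Subgroup.zpowers g => Φ κ κ') :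
    ∃ c : G → Y → ℤ, (∀ a, c a ∈ fixedBy H (Y → ℤ)) ∧ (∀ a, ∀ h ∈ H, c (a * h) = c a) ∧
      Φ = dOne c := by
  let Φℚ : G → G → Y → ℚ := fun a b => (Int.castAddHom ℚ).compLeft Y (Φ a b)
  let β := averageCochain Φℚ
  have hβ : Φℚ = dOne β := (hΦ.map _ (compLeft_smul _)).eq_dOne_averageCochain
  have hβH : ∀ a, β a ∈ fixedBy H (Y → ℚ) := averageCochain_mem_fixedBy H fun a b h hh => by
    simp only [Φℚ, ← compLeft_smul, hΦH a b h hh]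
  have hβQ : ∀ a, ∀ h ∈ H, β (a * h) = β a := fun a h hh => by
    simp only [β, averageCochain, Φℚ, hΦQ a _ h hh]
  have hu : IsOneCocycle fun a =>
      (QuotientAddGroup.mk' (Int.castAddHom ℚ).range).compLeft Y (β a) := by
    rw [isOneCocycle_iff, dOne_comp _ (compLeft_smul (QuotientAddGroup.mk' _))]
    funext a b y
    rw [← congrFun₂ hβ a b]
    simp [Φℚ]
  obtain ⟨m, hm⟩ := hu.isOneCoboundary_of_stabilizer fun g y hy => by
    obtain ⟨k, hk⟩ := exists_intCast_eq_of_smul_eq (congrFun₂ hβ) (hcyc g) hy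
    simp [← hk]
  obtain ⟨c, hcH, hcQ, hc⟩ := exists_intCast_dOne_eq H hβQ hβH hm
  exact ⟨c, hcH, hcQ, funext₂ fun a b => intCast_compLeft_injective (by rw [hc, ← hβ])⟩

theorem IsTwoCocycle.isTwoCoboundary_of_zpowers [Fintype G] {H : Subgroup G} [H.Normal]
    {M : Type*} [AddCommGroup M] [DistribMulAction G M] (e : M ≃+ (Y → ℤ))
    (he : ∀ (g : G) (m : M), e (g • m) = g • e m) {F : G ⧸ H → G ⧸ H → fixedBy H M}
    (hF : IsTwoCocycle F)
    (hcyc : ∀ g : G, IsTwoCoboundary fun κ κ' : Subgroup.zpowers g => (F κ κ' : M)) :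
    IsTwoCoboundary F := by
  have he' : ∀ (g : G) y, e.symm (g • y) = g • e.symm y := fun g y =>
    e.injective (by rw [he, AddEquiv.apply_symm_apply, AddEquiv.apply_symm_apply])
  obtain ⟨c, hcH, hcQ, hc⟩ := exists_dOne_eq_of_isTwoCoboundary_zpowers H
    (hF.inflate.map e.toAddMonoidHom he) (fun a b h hh => by
      simp only [AddEquiv.coe_toAddMonoidHom, ← he, (F a b).2 h hh])
    (fun a b h hh => by
      simp only [QuotientGroup.mk_mul, (QuotientGroup.eq_one_iff h).mpr hh, mul_one])
    fun g => (hcyc g).map e.toAddMonoidHom fun κ => he κ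
  refine isTwoCoboundary_of_inflate (fun a => e.symm (c a)) (fun a h hh => by
    rw [← he', hcH a h hh]) (fun a h hh => by rw [hcQ a h hh]) fun a b => e.injective ?_
  have := congrFun₂ (dOne_comp e.toAddMonoidHom he fun a => e.symm (c a)) a b
  simp only [AddEquiv.coe_toAddMonoidHom, AddEquiv.apply_symm_apply] at this
  rw [← this, ← hc]
  rfl

end CyclicDetection

section Lattice

variable {G : Type*} [Group G] {H : Subgroup G} {l : ℕ}

lemma smul_coset [H.Normal] (g : G) (τ : G ⧸ H) : g • τ = (g : G ⧸ H) * τ := by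
  induction τ using QuotientGroup.induction_on with
  | H a => rw [MulAction.Quotient.smul_mk, smul_eq_mul, QuotientGroup.mk_mul]

lemma coe_smul_eq_smul [H.Normal] (g : G) (v : G ⧸ H → ℤ) : (g : G ⧸ H) • v = g • v := by
  funext τ
  rw [funAction_smul_apply, funAction_smul_apply, smul_coset, smul_eq_mul, QuotientGroup.mk_inv]

variable [Fintype G]

lemma fp_injective : Function.Injective (fp G H l) := fun _ _ h =>
  funext fun τ => congrFun (congrArg Prod.fst h) (τ, 1)

variable (G H l) in
abbrev DpBasis : Type _ := ((G ⧸ H) × G) ⊕ (G ⊕ Om G H l)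

variable (G H l) in
def dpEquiv : Dp G H l ≃+ (DpBasis G H l → ℤ) where
  toFun d := Sum.elim d.1 (Sum.elim d.2.1 d.2.2)
  invFun u := (u ∘ Sum.inl, u ∘ Sum.inr ∘ Sum.inl, u ∘ Sum.inr ∘ Sum.inr)
  left_inv _ := rfl
  right_inv u := funext fun y => by rcases y with p | a | o <;> rfl
  map_add' _ _ := funext fun y => by rcases y with p | a | o <;> rfl

variable [DecidableEq G]

lemma dpEquiv_smul (g : G) (d : Dp G H l) : dpEquiv G H l (g • d) = g • dpEquiv G H l d := by
  funext y
  rcases y with p | a | o <;> rfl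

lemma mk'_smul (g : G) (d : Dp G H l) :
    QuotientAddGroup.mk' (fp G H l).range (g • d) = g • QuotientAddGroup.mk' (fp G H l).range d :=
  rfl

variable [H.Normal]

lemma smul_fp_of_mem {h : G} (hh : h ∈ H) (v : G ⧸ H → ℤ) : h • fp G H l v = fp G H l v := by
  rw [← fp_equivariant, ← coe_smul_eq_smul, (QuotientGroup.eq_one_iff h).mpr hh, one_smul]

lemma smul_eq_of_mk_smul_eq {h : G} (hh : h ∈ H) {d : Dp G H l}
    (hd : (QuotientAddGroup.mk (h • d) : Tp G H l) = QuotientAddGroup.mk d) : h • d = d := by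
  obtain ⟨v, hv⟩ := AddMonoidHom.mem_range.mp
    ((QuotientAddGroup.eq_zero_iff _).mp (by rw [QuotientAddGroup.mk_sub, hd, sub_self] :
      (QuotientAddGroup.mk (h • d - d) : Tp G H l) = 0))
  suffices v = 0 by rwa [this, map_zero, eq_comm, sub_eq_zero] at hv
  funext τ
  -- comparing first components, `v τ = d (τ, h⁻¹ a) - d (τ, a)` for every `a`; sum over `a`
  have hcomp : ∀ a : G, v τ = d.1 (τ, h⁻¹ * a) - d.1 (τ, a) := fun a => by
    have := congrFun (congrArg Prod.fst hv) (τ, a)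
    rwa [fp_apply, Prod.fst_sub, Prod.smul_fst, Pi.sub_apply, funAction_smul_apply, Prod.smul_mk,
      smul_coset, (QuotientGroup.eq_one_iff _).mpr (inv_mem hh), one_mul, smul_eq_mul] at this
  have hsum := Finset.sum_congr rfl fun a (_ : a ∈ Finset.univ) => hcomp a
  rw [Finset.sum_sub_distrib, sum_mul_left h⁻¹ fun a => d.1 (τ, a), sub_self, Finset.sum_const,
    Finset.card_univ, smul_eq_zero] at hsum
  exact hsum.resolve_left Fintype.card_ne_zero

lemma exists_isTwoCocycle_dp_lift {f : G ⧸ H → G ⧸ H → fixedBy H (Tp G H l)}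
    (hf : IsTwoCocycle f) : ∃ F : G ⧸ H → G ⧸ H → fixedBy H (Dp G H l), IsTwoCocycle F ∧
      ∀ a b, fixedByMap H (QuotientAddGroup.mk' (fp G H l).range) mk'_smul (F a b) =
        f a b := by
  refine exists_isTwoCocycle_lift
    (ι := (fp G H l).codRestrict (fixedBy H (Dp G H l)) fun v h hh => smul_fp_of_mem hh v)
    (fun q v => ?_) (fixedByMap_smul H _ _) (fun v w h => fp_injective (congrArg Subtype.val h))
    (fun d => ?_) (fun x => ?_)
    (fun w => isThreeCoboundary_of_free (fun _ _ => mul_eq_right.mp) w) hf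
  · induction q using QuotientGroup.induction_on with | H g =>
    refine Subtype.ext ?_
    show fp G H l ((g : G ⧸ H) • v) = g • fp G H l v
    rw [coe_smul_eq_smul, fp_equivariant]
  · rw [Subtype.ext_iff, coe_fixedByMap, ZeroMemClass.coe_zero, QuotientAddGroup.mk'_apply,
      QuotientAddGroup.eq_zero_iff, AddMonoidHom.mem_range]
    exact ⟨fun ⟨v, hv⟩ => ⟨v, Subtype.ext hv⟩, fun ⟨v, hv⟩ => ⟨v, congrArg Subtype.val hv⟩⟩
  · obtain ⟨d, hd⟩ := QuotientAddGroup.mk_surjective (x : Tp G H l)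
    refine ⟨⟨d, fun h hh => smul_eq_of_mk_smul_eq hh ?_⟩, Subtype.ext hd⟩
    rw [← Tp_smul_mk, hd, x.2 h hh]

lemma IsTwoCocycle.isTwoCoboundary_restrict_of_mk (G' : Subgroup G)
    {F : G ⧸ H → G ⧸ H → fixedBy H (Dp G H l)} (hF : IsTwoCocycle F)
    (hf : IsTwoCoboundary fun a b : ↥G' ⧸ (G' ⊓ H).subgroupOf G' =>
      fixedInc H l G' (fixedByMap H (QuotientAddGroup.mk' _) mk'_smul
        (F (quotMap H G' a) (quotMap H G' b)))) :
    IsTwoCoboundary fun a b : ↥G' ⧸ (G' ⊓ H).subgroupOf G' =>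
      fixedByRes H G' (F (quotMap H G' a) (quotMap H G' b)) := by
  let _ : MulAction (↥G' ⧸ (G' ⊓ H).subgroupOf G') (G ⧸ H) := MulAction.compHom _ (quotMap H G')
  have hmem : ∀ κ ∈ (G' ⊓ H).subgroupOf G', (κ : G) ∈ H := fun κ hκ =>
    (Subgroup.mem_inf.mp (Subgroup.mem_subgroupOf.mp hκ)).2
  refine (hF.restrict H G').isTwoCoboundary_of_comp
    (ι := (fp G H l).codRestrict (fixedBy ((G' ⊓ H).subgroupOf G') (Dp G H l))
      fun v κ hκ => smul_fp_of_mem (hmem κ hκ) v)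
    (π := fixedByMap _ (QuotientAddGroup.mk' _) fun κ => mk'_smul (κ : G))
    (fun q v => ?_) (fixedByMap_smul _ _ _) (fun v w h => fp_injective (congrArg Subtype.val h))
    (fun d => ?_) (fun x => ?_) (fun w => isTwoCoboundary_of_free (fun q x hx => ?_) w) hf
  · induction q using QuotientGroup.induction_on with | H κ =>
    refine Subtype.ext ?_
    show fp G H l ((QuotientGroup.mk κ : ↥G' ⧸ _) • v) = (κ : G) • fp G H l v
    rw [← fp_equivariant, ← coe_smul_eq_smul]
    rfl
  · rw [Subtype.ext_iff, coe_fixedByMap, ZeroMemClass.coe_zero, QuotientAddGroup.mk'_apply,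
      QuotientAddGroup.eq_zero_iff, AddMonoidHom.mem_range]
    exact ⟨fun ⟨v, hv⟩ => ⟨v, Subtype.ext hv⟩, fun ⟨v, hv⟩ => ⟨v, congrArg Subtype.val hv⟩⟩
  · obtain ⟨d, hd⟩ := QuotientAddGroup.mk_surjective (x : Tp G H l)
    refine ⟨⟨d, fun κ hκ => smul_eq_of_mk_smul_eq (hmem κ hκ) ?_⟩, Subtype.ext hd⟩
    rw [← Tp_smul_mk, hd, ← Subgroup.smul_def, x.2 κ hκ]
  · exact quotMap_injective H G' ((mul_eq_right.mp hx).trans (map_one _).symm)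

end Lattice

theorem stmt1_general (G : Type) [Group G] [Fintype G] [DecidableEq G]
    (H : Subgroup G) [H.Normal] (l : ℕ)
    (f : (G ⧸ H) → (G ⧸ H) → fixedBy H (Tp G H l))
    (hf : IsTwoCocycle f)
    (hres : ∀ G' : Subgroup G, IsCyclic ↥G' →
      IsTwoCoboundary (fun a b : ↥G' ⧸ (G' ⊓ H).subgroupOf G' =>
        fixedInc H l G' (f (quotMap H G' a) (quotMap H G' b)))) :
    IsTwoCoboundary f := by
  obtain ⟨F, hF, hFf⟩ := exists_isTwoCocycle_dp_lift hf
  obtain rfl : f = fun a b => fixedByMap H _ mk'_smul (F a b) := funext₂ fun a b => (hFf a b).symm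
  refine (hF.isTwoCoboundary_of_zpowers (dpEquiv G H l) dpEquiv_smul fun g => ?_).map _
    (fixedByMap_smul H _ mk'_smul)
  exact (hF.isTwoCoboundary_restrict_of_mk _ (hres _ inferInstance)).inflate

/-- With `G` a finite group of order `n`, `H` a normal subgroup, `l > 0`,
`e' = gcd(n, l·[G:H])`, `n ∤ l·[G:H]`, and `T' = coker(f' : ℤ[G/H] → D')`: the
homomorphism `H²(G/H, (T')^H) → ∏_{G'} H²(G'/(G'∩H), (T')^{G'∩H})`, the product running
over all cyclic subgroups `G'` of `G`, with components induced by the natural injections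
`G'/(G'∩H) → G/H` and the inclusions `(T')^H ⊆ (T')^{G'∩H}`, is injective.  (Expressed
at the level of cocycles: every 2-cocycle of `G/H` with values in `(T')^H` whose image
cocycle is a 2-coboundary for every cyclic subgroup `G'` is itself a 2-coboundary.) -/
theorem stmt1 (G : Type) [Group G] [Fintype G] [DecidableEq G]
    (H : Subgroup G) [H.Normal] (l : ℕ) (hl : 0 < l)
    (hndvd : ¬ (Fintype.card G ∣ l * H.index))
    (f : (G ⧸ H) → (G ⧸ H) → fixedBy H (Tp G H l))
    (hf : IsTwoCocycle f)
    (hres : ∀ G' : Subgroup G, IsCyclic ↥G' →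
      IsTwoCoboundary (fun a b : ↥G' ⧸ (G' ⊓ H).subgroupOf G' =>
        fixedInc H l G' (f (quotMap H G' a) (quotMap H G' b)))) :
    IsTwoCoboundary f :=
  stmt1_general G H l f hf hres

end Normic
end

section
/- The homomorphism H²(G, T) → H²(G, T') induced by the G-module map j : T → T' is injective. -/
/-!
Since `j` is injective, the long exact cohomology sequence of `0 → T → T' → Q → 0` reduces the
claim to `H¹(G, Q) = 0`. The cokernel `Q = D / (f(ℤ[G/J₁] ⊕ ℤ[G/J₂]) + ℤ[G])` is a permutation
lattice: explicit maps identify it with `ℤ[G]² ⊕ ℤ[G/J₃]`, where `J₃` is the diagonal subgroup.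
The first cohomology of a transitive permutation lattice `ℤ[G/H]` is `Hom(H, ℤ) = 0`.
-/

set_option synthInstance.maxHeartbeats 1000000
set_option maxHeartbeats 1600000

namespace Normic

section NormOne

variable (G : Type*) [Group G]

/-- The norm element `N_G = Σ_{g∈G} g` of the regular module `ℤ[G] = (G → ℤ)`:
the constant function `1`. -/
def normElt : G → ℤ := fun _ => (1 : ℤ)

/-- The character lattice of the norm-one torus: `T = ℤ[G]/(ℤ·N_G)`, the quotient of the
regular module by the subgroup generated by the norm element. -/
abbrev TT := (G → ℤ) ⧸ AddSubgroup.zmultiples (normElt G)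

lemma smul_normElt (g : G) : g • normElt G = normElt G := rfl

instance : SMul G (TT G) :=
  ⟨fun g => QuotientAddGroup.map _ _ (DistribMulAction.toAddMonoidHom (G → ℤ) g) (by
    intro d hd
    obtain ⟨k, rfl⟩ := AddSubgroup.mem_zmultiples_iff.mp hd
    refine AddSubgroup.mem_comap.mpr (AddSubgroup.mem_zmultiples_iff.mpr ⟨k, ?_⟩)
    show k • normElt G = g • k • normElt G
    rfl)⟩

lemma TT_smul_mk (g : G) (d : G → ℤ) :
    g • (QuotientAddGroup.mk d : TT G) = QuotientAddGroup.mk (g • d) := rfl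

/-- The `G`-action on `T = ℤ[G]/(ℤ·N_G)`. -/
instance : DistribMulAction G (TT G) where
  one_smul x := by
    induction x using QuotientAddGroup.induction_on with
    | H d => rw [TT_smul_mk, one_smul]
  mul_smul g g' x := by
    induction x using QuotientAddGroup.induction_on with
    | H d => rw [TT_smul_mk, TT_smul_mk, TT_smul_mk, mul_smul]
  smul_zero g :=
    map_zero (QuotientAddGroup.map _ _ (DistribMulAction.toAddMonoidHom (G → ℤ) g) _)
  smul_add g x y :=
    map_add (QuotientAddGroup.map _ _ (DistribMulAction.toAddMonoidHom (G → ℤ) g) _) x y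

end NormOne

section Klein

/-- The cyclic group `C₂` of order 2. -/
abbrev C2 : Type := Multiplicative (ZMod 2)

/-- The Klein four-group `G = C₂ × C₂`. -/
abbrev KG : Type := C2 × C2

/-- The factor subgroup `J₁ = {1} × C₂` of `G = C₂ × C₂`. -/
def J1 : Subgroup KG := (MonoidHom.fst C2 C2).ker

/-- The factor subgroup `J₂ = C₂ × {1}` of `G = C₂ × C₂`. -/
def J2 : Subgroup KG := (MonoidHom.snd C2 C2).ker

/-- The `G`-lattice `D = ((ℤ[G/J₁] ⊕ ℤ[G/J₂]) ⊗ ℤ[G]) ⊕ ℤ`, realized concretely: the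
tensor summands are the permutation lattices on `(G/J_i) × G` with the diagonal action,
and the trivial `G`-module `ℤ` is realized as `Unit → ℤ`. -/
abbrev DK : Type := (((KG ⧸ J1) × KG) → ℤ) × ((((KG ⧸ J2) × KG) → ℤ) × (Unit → ℤ))

/-- The `G`-equivariant map `f : ℤ[G/J₁] ⊕ ℤ[G/J₂] → D` sending each coset `τ` to
`(τ ⊗ N_G, −1)`. -/
noncomputable def fK : (((KG ⧸ J1) → ℤ) × ((KG ⧸ J2) → ℤ)) →+ DK :=
  AddMonoidHom.mk' (fun x =>
    (fun p => x.1 p.1,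
     fun p => x.2 p.1,
     fun _ => -((∑ᶠ τ, x.1 τ) + ∑ᶠ τ, x.2 τ))) (by
    intro x y
    have h1 : ∑ᶠ τ, (x.1 τ + y.1 τ) = (∑ᶠ τ, x.1 τ) + ∑ᶠ τ, y.1 τ :=
      finsum_add_distrib (Set.toFinite _) (Set.toFinite _)
    have h2 : ∑ᶠ τ, (x.2 τ + y.2 τ) = (∑ᶠ τ, x.2 τ) + ∑ᶠ τ, y.2 τ :=
      finsum_add_distrib (Set.toFinite _) (Set.toFinite _)
    refine Prod.ext ?_ (Prod.ext ?_ ?_)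
    · funext p; simp
    · funext p; simp
    · funext u
      show -(∑ᶠ τ, (x.1 τ + y.1 τ) + ∑ᶠ τ, (x.2 τ + y.2 τ)) = _
      rw [h1, h2]
      show _ = -((∑ᶠ τ, x.1 τ) + ∑ᶠ τ, x.2 τ) + -((∑ᶠ τ, y.1 τ) + ∑ᶠ τ, y.2 τ)
      ring)

lemma fK_apply (x : ((KG ⧸ J1) → ℤ) × ((KG ⧸ J2) → ℤ)) :
    fK x = (fun p => x.1 p.1, fun p => x.2 p.1,
      fun _ => -((∑ᶠ τ, x.1 τ) + ∑ᶠ τ, x.2 τ)) := rfl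

lemma fK_equivariant (g : KG) (x : ((KG ⧸ J1) → ℤ) × ((KG ⧸ J2) → ℤ)) :
    fK (g • x) = g • fK x := by
  have hre1 : ∑ᶠ τ, x.1 (g⁻¹ • τ) = ∑ᶠ τ, x.1 τ :=
    finsum_eq_of_bijective (fun τ => g⁻¹ • τ) (MulAction.bijective g⁻¹) (fun τ => rfl)
  have hre2 : ∑ᶠ τ, x.2 (g⁻¹ • τ) = ∑ᶠ τ, x.2 τ :=
    finsum_eq_of_bijective (fun τ => g⁻¹ • τ) (MulAction.bijective g⁻¹) (fun τ => rfl)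
  refine Prod.ext ?_ (Prod.ext ?_ ?_)
  · funext p
    simp only [fK_apply, funAction_smul_apply, Prod.smul_fst, Prod.smul_snd]
  · funext p
    simp only [fK_apply, funAction_smul_apply, Prod.smul_fst, Prod.smul_snd]
  · funext u
    show -(∑ᶠ τ, (g • x).1 τ + ∑ᶠ τ, (g • x).2 τ) = _
    have e1 : ∀ τ, (g • x).1 τ = x.1 (g⁻¹ • τ) := fun τ => rfl
    have e2 : ∀ τ, (g • x).2 τ = x.2 (g⁻¹ • τ) := fun τ => rfl
    simp only [e1, e2, hre1, hre2]
    rfl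

/-- The `G`-lattice `T' = coker(f : ℤ[G/J₁] ⊕ ℤ[G/J₂] → D)`. -/
noncomputable abbrev TK : Type := DK ⧸ fK.range

noncomputable instance : SMul KG TK :=
  ⟨fun g => QuotientAddGroup.map _ _ (DistribMulAction.toAddMonoidHom DK g) (by
    rintro _ ⟨x, rfl⟩
    exact ⟨g • x, fK_equivariant g x⟩)⟩

lemma TK_smul_mk (g : KG) (d : DK) :
    g • (QuotientAddGroup.mk d : TK) = QuotientAddGroup.mk (g • d) := rfl

/-- The `G`-action on `T'`. -/
noncomputable instance : DistribMulAction KG TK where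
  one_smul x := by
    induction x using QuotientAddGroup.induction_on with
    | H d => rw [TK_smul_mk, one_smul]
  mul_smul g g' x := by
    induction x using QuotientAddGroup.induction_on with
    | H d => rw [TK_smul_mk, TK_smul_mk, TK_smul_mk, mul_smul]
  smul_zero g :=
    map_zero (QuotientAddGroup.map _ _ (DistribMulAction.toAddMonoidHom DK g) _)
  smul_add g x y :=
    map_add (QuotientAddGroup.map _ _ (DistribMulAction.toAddMonoidHom DK g) _) x y

/-- The lift `ℤ[G] → D` of the map `j`, sending `σ` to `(−(N₁ + N₂) ⊗ σ, 1)`. -/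
noncomputable def j0 : (KG → ℤ) →+ DK :=
  AddMonoidHom.mk' (fun z =>
    (fun p => -(z p.2), fun p => -(z p.2), fun _ => ∑ᶠ g, z g)) (by
    intro z w
    have h : ∑ᶠ g, (z g + w g) = (∑ᶠ g, z g) + ∑ᶠ g, w g :=
      finsum_add_distrib (Set.toFinite _) (Set.toFinite _)
    refine Prod.ext ?_ (Prod.ext ?_ ?_)
    · funext p; show -((z + w) p.2) = _; simp; ring
    · funext p; show -((z + w) p.2) = _; simp; ring
    · funext u
      show ∑ᶠ g, (z g + w g) = _
      rw [h]; rfl)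

lemma j0_normElt_mem : j0 (normElt KG) ∈ fK.range := by
  classical
  refine ⟨(fun _ => -1, fun _ => -1), ?_⟩
  haveI : Fintype (KG ⧸ J1) := Fintype.ofFinite _
  haveI : Fintype (KG ⧸ J2) := Fintype.ofFinite _
  have hJ1 : Nat.card (KG ⧸ J1) = 2 := by
    show J1.index = 2
    rw [J1, Subgroup.index_ker]
    rw [MonoidHom.range_eq_top_of_surjective _ Prod.fst_surjective]
    rw [Subgroup.card_top, Nat.card_eq_fintype_card]
    decide
  have hJ2 : Nat.card (KG ⧸ J2) = 2 := by
    show J2.index = 2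
    rw [J2, Subgroup.index_ker]
    rw [MonoidHom.range_eq_top_of_surjective _ Prod.snd_surjective]
    rw [Subgroup.card_top, Nat.card_eq_fintype_card]
    decide
  have hc1 : Fintype.card (KG ⧸ J1) = 2 := by rw [← Nat.card_eq_fintype_card, hJ1]
  have hc2 : Fintype.card (KG ⧸ J2) = 2 := by rw [← Nat.card_eq_fintype_card, hJ2]
  have hs1 : (∑ᶠ τ : KG ⧸ J1, (-1 : ℤ)) = -2 := by
    rw [finsum_eq_sum_of_fintype, Finset.sum_const, Finset.card_univ, hc1]
    norm_num
  have hs2 : (∑ᶠ τ : KG ⧸ J2, (-1 : ℤ)) = -2 := by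
    rw [finsum_eq_sum_of_fintype, Finset.sum_const, Finset.card_univ, hc2]
    norm_num
  have hsG : (∑ᶠ g : KG, (1 : ℤ)) = 4 := by
    rw [finsum_eq_sum_of_fintype, Finset.sum_const, Finset.card_univ]
    norm_num
  refine Prod.ext rfl (Prod.ext rfl ?_)
  funext u
  show -((∑ᶠ τ : KG ⧸ J1, (-1 : ℤ)) + ∑ᶠ τ : KG ⧸ J2, (-1 : ℤ)) = ∑ᶠ g : KG, (1 : ℤ)
  rw [hs1, hs2, hsG]; norm_num

/-- The `G`-module homomorphism `j : T → T'` induced by `ℤ[G] → D, σ ↦ (−(N₁+N₂) ⊗ σ, 1)`;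
it is well defined since the image of `N_G` lies in the image of `f`. -/
noncomputable def jmap : TT KG →+ TK :=
  QuotientAddGroup.map _ _ j0 (by
    intro d hd
    obtain ⟨k, rfl⟩ := AddSubgroup.mem_zmultiples_iff.mp hd
    refine AddSubgroup.mem_comap.mpr ?_
    show j0 (k • normElt KG) ∈ fK.range
    rw [j0.map_zsmul]
    exact AddSubgroup.zsmul_mem _ j0_normElt_mem k)

end Klein

section Cohomology

def H1Trivial (Γ M : Type*) [Group Γ] [AddCommGroup M] [DistribMulAction Γ M] : Prop :=
  ∀ f : Γ → M, IsOneCocycle f → IsOneCoboundary f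

variable {Γ : Type*} [Group Γ] {α M : Type*} [MulAction Γ α] [AddCommGroup M]

lemma IsOneCocycle.map_one [DistribMulAction Γ M] {f : Γ → M} (hf : IsOneCocycle f) :
    f 1 = 0 := by
  simpa using hf 1 1

lemma IsOneCocycle.apply_eq_zero_of_smul_eq [Finite Γ] [IsAddTorsionFree M] {a : Γ → α → M}
    (ha : IsOneCocycle a) {h : Γ} {x : α} (hx : h • x = x) : a h x = 0 := by
  have hstab : h ∈ MulAction.stabilizer Γ x := hx
  have hpow : ∀ n : ℕ, a (h ^ n) x = n • a h x := by
    intro n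
    induction n with
    | zero => simp [ha.map_one]
    | succ n ih =>
      have hfix : (h ^ n)⁻¹ • x = x := inv_mem (pow_mem hstab n)
      rw [pow_succ, ha, Pi.add_apply, funAction_smul_apply, hfix, ih, succ_nsmul, add_comm]
  have hcard : Nat.card Γ • a h x = Nat.card Γ • 0 := by
    rw [← hpow, pow_card_eq_one', ha.map_one, smul_zero, Pi.zero_apply]
  exact nsmul_right_injective Nat.card_pos.ne' hcard

/-- Shapiro's lemma for `H¹`: the coboundary is `y ↦ a (k y)⁻¹ x₀` with `k y • x₀ = y`. -/
lemma IsOneCocycle.isOneCoboundary_of_isPretransitive [Finite Γ] [IsAddTorsionFree M]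
    [MulAction.IsPretransitive Γ α] {a : Γ → α → M} (ha : IsOneCocycle a) :
    IsOneCoboundary a := by
  rcases isEmpty_or_nonempty α with hα | ⟨⟨x₀⟩⟩
  · exact ⟨0, fun g => funext fun x => isEmptyElim x⟩
  choose k hk using MulAction.exists_smul_eq Γ x₀
  refine ⟨fun y => a (k y)⁻¹ x₀, fun g => funext fun x => ?_⟩
  set ρ := k x
  set ρ' := k (g⁻¹ • x)
  have hstab : (ρ⁻¹ * g * ρ') • x₀ = x₀ := by
    rw [mul_smul, mul_smul, hk, smul_inv_smul, inv_smul_eq_iff, hk]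
  have e₁ : a ρ'⁻¹ x₀ = a (ρ⁻¹ * g) x₀ := by
    rw [show ρ'⁻¹ = (ρ⁻¹ * g * ρ')⁻¹ * (ρ⁻¹ * g) by group, ha, Pi.add_apply,
      funAction_smul_apply, inv_inv, hstab,
      ha.apply_eq_zero_of_smul_eq (inv_smul_eq_iff.mpr hstab.symm), add_zero]
  have e₂ : a (ρ⁻¹ * g) x₀ = a g x + a ρ⁻¹ x₀ := by
    rw [ha, Pi.add_apply, funAction_smul_apply, inv_inv, hk]
  change a g x = a ρ'⁻¹ x₀ - a ρ⁻¹ x₀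
  rw [e₁, e₂, add_sub_cancel_right]

lemma H1Trivial.prod {N : Type*} [AddCommGroup N] [DistribMulAction Γ M] [DistribMulAction Γ N]
    (hM : H1Trivial Γ M) (hN : H1Trivial Γ N) : H1Trivial Γ (M × N) := by
  intro f hf
  obtain ⟨m, hm⟩ := hM (fun g => (f g).1) fun g h => congrArg Prod.fst (hf g h)
  obtain ⟨n, hn⟩ := hN (fun g => (f g).2) fun g h => congrArg Prod.snd (hf g h)
  exact ⟨(m, n), fun g => Prod.ext (hm g) (hn g)⟩

end Cohomology

section LongExactSequence

variable {Γ : Type*} [Group Γ] {M M' F : Type*} [AddCommGroup M] [AddCommGroup M']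
  [AddCommGroup F] [DistribMulAction Γ M'] [DistribMulAction Γ F]

lemma exists_sub_smul_sub_mem_range (j : M →+ M') (p : M' →+ F) (s : F → M')
    (hp : ∀ (g : Γ) x, p (g • x) = g • p x) (hpj : ∀ x, p (j x) = 0) (hps : ∀ y, p (s y) = y)
    (hsp : ∀ x, x - s (p x) ∈ j.range) (hF : H1Trivial Γ F) {a : Γ → M'}
    (ha : ∀ g h, g • a h - a (g * h) + a g ∈ j.range) :
    ∃ m, ∀ g, a g - (g • m - m) ∈ j.range := by
  have hcocycle : IsOneCocycle fun g => p (a g) := by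
    intro g h
    obtain ⟨x, hx⟩ := ha g h
    have hpx := congrArg p hx
    rw [hpj, map_add, map_sub, hp] at hpx
    change p (a (g * h)) = g • p (a h) + p (a g)
    rw [← sub_eq_zero, ← neg_eq_zero, hpx]
    abel
  obtain ⟨n, hn⟩ := hF _ hcocycle
  refine ⟨s n, fun g => ?_⟩
  have hsn := hsp (g • s n - s n)
  rw [map_sub, hp, hps, ← hn g] at hsn
  convert sub_mem (hsp (a g)) hsn using 1
  abel

lemma IsTwoCoboundary.of_comp [DistribMulAction Γ M] (j : M →+ M') (hj : Function.Injective j)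
    (hjg : ∀ (g : Γ) x, j (g • x) = g • j x)
    (hrel : ∀ a : Γ → M', (∀ g h, g • a h - a (g * h) + a g ∈ j.range) →
      ∃ m, ∀ g, a g - (g • m - m) ∈ j.range)
    {f : Γ → Γ → M} (hf : IsTwoCoboundary fun g h => j (f g h)) : IsTwoCoboundary f := by
  obtain ⟨a, ha⟩ := hf
  simp only at ha
  obtain ⟨m, hm⟩ := hrel a fun g h => ⟨f g h, ha g h⟩
  choose b hb using hm
  refine ⟨b, fun g h => hj ?_⟩
  rw [map_add, map_sub, hjg, hb, hb, hb, ha, smul_sub, smul_sub, mul_smul]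
  abel

end LongExactSequence

section KleinGroup

def g₁ : KG := (Multiplicative.ofAdd 1, 1)

def g₂ : KG := (1, Multiplicative.ofAdd 1)

def J3 : Subgroup KG := (mulMonoidHom : KG →* C2).ker

lemma KG_cases (x : KG) : x = 1 ∨ x = g₁ ∨ x = g₂ ∨ x = g₁ * g₂ := by
  revert x; decide

lemma eq_mul_cases (x y : KG) : y = x ∨ y = x * g₁ ∨ y = x * g₂ ∨ y = x * (g₁ * g₂) := by
  revert x y; decide

lemma g₁_mul_g₁ : g₁ * g₁ = 1 := by decide
lemma g₂_mul_g₂ : g₂ * g₂ = 1 := by decide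
lemma g₂_mul_g₁ : g₂ * g₁ = g₁ * g₂ := by decide
lemma g₁_mul_g₂_mul_g₁ : g₁ * g₂ * g₁ = g₂ := by decide
lemma g₁_mul_g₂_mul_g₂ : g₁ * g₂ * g₂ = g₁ := by decide
lemma g₁_mul_g₁_mul_g₂ : g₁ * (g₁ * g₂) = g₂ := by decide
lemma g₂_mul_g₁_mul_g₂ : g₂ * (g₁ * g₂) = g₁ := by decide
lemma g₁_mul_g₂_mul_g₁_mul_g₂ : g₁ * g₂ * (g₁ * g₂) = 1 := by decide

lemma mul_g₁_mul_g₁ (x : KG) : x * g₁ * g₁ = x := by rw [mul_assoc, g₁_mul_g₁, mul_one]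
lemma mul_g₂_mul_g₂ (x : KG) : x * g₂ * g₂ = x := by rw [mul_assoc, g₂_mul_g₂, mul_one]
lemma mul_g₁_g₂_mul_g₁ (x : KG) : x * (g₁ * g₂) * g₁ = x * g₂ := by
  rw [mul_assoc, g₁_mul_g₂_mul_g₁]

lemma one_mem_J1 : (1 : KG) ∈ J1 := J1.one_mem
lemma g₁_notMem_J1 : g₁ ∉ J1 := by rw [J1, MonoidHom.mem_ker]; decide
lemma g₂_mem_J1 : g₂ ∈ J1 := rfl
lemma g₁_mul_g₂_notMem_J1 : g₁ * g₂ ∉ J1 := by rw [J1, MonoidHom.mem_ker]; decide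

lemma mul_g₁_mem_J1_iff (x : KG) : x * g₁ ∈ J1 ↔ x ∉ J1 := by
  revert x; simp only [J1, MonoidHom.mem_ker]; decide

lemma mul_g₂_mem_J1_iff (x : KG) : x * g₂ ∈ J1 ↔ x ∈ J1 := by
  revert x; simp only [J1, MonoidHom.mem_ker]; decide

lemma mk_g₂_J1 : ((g₂ : KG) : KG ⧸ J1) = ((1 : KG) : KG ⧸ J1) := QuotientGroup.eq.mpr rfl
lemma mk_g₁_g₂_J1 : ((g₁ * g₂ : KG) : KG ⧸ J1) = ((g₁ : KG) : KG ⧸ J1) :=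
  QuotientGroup.eq.mpr rfl
lemma mk_g₁_J2 : ((g₁ : KG) : KG ⧸ J2) = ((1 : KG) : KG ⧸ J2) := QuotientGroup.eq.mpr rfl
lemma mk_g₁_g₂_J2 : ((g₁ * g₂ : KG) : KG ⧸ J2) = ((g₂ : KG) : KG ⧸ J2) :=
  QuotientGroup.eq.mpr rfl

lemma mk_one_ne_mk_g₁_J1 : ((1 : KG) : KG ⧸ J1) ≠ ((g₁ : KG) : KG ⧸ J1) := by
  rw [Ne, QuotientGroup.eq, J1, MonoidHom.mem_ker]; decide

lemma mk_g₂_ne_mk_one_J2 : ((g₂ : KG) : KG ⧸ J2) ≠ ((1 : KG) : KG ⧸ J2) := by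
  rw [Ne, QuotientGroup.eq, J2, MonoidHom.mem_ker]; decide

lemma mk_mul_g₂_J1 (x : KG) : ((x * g₂ : KG) : KG ⧸ J1) = x := QuotientGroup.mk_mul_of_mem x rfl

lemma mk_mul_g₁_J2 (x : KG) : ((x * g₁ : KG) : KG ⧸ J2) = x := QuotientGroup.mk_mul_of_mem x rfl

lemma mk_mul_g₁_g₂_J3 (x : KG) : ((x * (g₁ * g₂) : KG) : KG ⧸ J3) = x :=
  QuotientGroup.mk_mul_of_mem x rfl

lemma mk_mul_g₁_g₂_J1 (x : KG) :
    ((x * (g₁ * g₂) : KG) : KG ⧸ J1) = ((x * g₁ : KG) : KG ⧸ J1) := by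
  rw [← mul_assoc, mk_mul_g₂_J1]

lemma mk_mul_g₁_g₂_J2 (x : KG) :
    ((x * (g₁ * g₂) : KG) : KG ⧸ J2) = ((x * g₂ : KG) : KG ⧸ J2) := by
  rw [← g₂_mul_g₁, ← mul_assoc, mk_mul_g₁_J2]

lemma mk_ne_mk_mul_g₁_J1 (x : KG) : (x : KG ⧸ J1) ≠ ((x * g₁ : KG) : KG ⧸ J1) := by
  rw [Ne, QuotientGroup.eq]; revert x; simp only [J1, MonoidHom.mem_ker]; decide

lemma mk_ne_mk_mul_g₂_J2 (x : KG) : (x : KG ⧸ J2) ≠ ((x * g₂ : KG) : KG ⧸ J2) := by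
  rw [Ne, QuotientGroup.eq]; revert x; simp only [J2, MonoidHom.mem_ker]; decide

lemma J1_cases (τ : KG ⧸ J1) (x : KG) : τ = x ∨ τ = ((x * g₁ : KG) : KG ⧸ J1) := by
  induction τ using QuotientGroup.induction_on with
  | H y =>
    simp only [QuotientGroup.eq, J1, MonoidHom.mem_ker]
    revert x y; decide

lemma J2_cases (τ : KG ⧸ J2) (x : KG) : τ = x ∨ τ = ((x * g₂ : KG) : KG ⧸ J2) := by
  induction τ using QuotientGroup.induction_on with
  | H y =>
    simp only [QuotientGroup.eq, J2, MonoidHom.mem_ker]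
    revert x y; decide

lemma J1_pair_cases (p : (KG ⧸ J1) × KG) :
    ∃ x : KG, p = ((x : KG ⧸ J1), x) ∨ p = ((x : KG ⧸ J1), x * g₁) := by
  obtain ⟨τ, σ⟩ := p
  rcases J1_cases τ σ with rfl | rfl
  · exact ⟨σ, .inl rfl⟩
  · exact ⟨σ * g₁, .inr (by rw [mul_g₁_mul_g₁])⟩

lemma J2_pair_cases (p : (KG ⧸ J2) × KG) :
    ∃ x : KG, p = ((x : KG ⧸ J2), x) ∨ p = ((x : KG ⧸ J2), x * g₂) := by
  obtain ⟨τ, σ⟩ := p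
  rcases J2_cases τ σ with rfl | rfl
  · exact ⟨σ, .inl rfl⟩
  · exact ⟨σ * g₂, .inr (by rw [mul_g₂_mul_g₂])⟩

lemma finsum_J1 (f : KG ⧸ J1 → ℤ) (x : KG) :
    ∑ᶠ τ, f τ = f x + f ((x * g₁ : KG) : KG ⧸ J1) := by
  classical
  rw [finsum_eq_sum_of_support_subset f (s := {(x : KG ⧸ J1), ((x * g₁ : KG) : KG ⧸ J1)}),
    Finset.sum_pair (mk_ne_mk_mul_g₁_J1 x)]
  intro τ _
  rcases J1_cases τ x with rfl | rfl <;> simp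

lemma finsum_J2 (f : KG ⧸ J2 → ℤ) (x : KG) :
    ∑ᶠ τ, f τ = f x + f ((x * g₂ : KG) : KG ⧸ J2) := by
  classical
  rw [finsum_eq_sum_of_support_subset f (s := {(x : KG ⧸ J2), ((x * g₂ : KG) : KG ⧸ J2)}),
    Finset.sum_pair (mk_ne_mk_mul_g₂_J2 x)]
  intro τ _
  rcases J2_cases τ x with rfl | rfl <;> simp

lemma finsum_KG (f : KG → ℤ) (x : KG) :
    ∑ᶠ g, f g = f x + f (x * g₁) + f (x * g₂) + f (x * (g₁ * g₂)) := by
  rw [finsum_eq_sum_of_support_subset f (s := {x, x * g₁, x * g₂, x * (g₁ * g₂)})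
      fun y _ => by simpa using eq_mul_cases x y,
    Finset.sum_insert, Finset.sum_insert, Finset.sum_pair, ← add_assoc, ← add_assoc]
  all_goals revert x; decide

end KleinGroup

section Splitting

abbrev PermLattice : Type := (KG → ℤ) × (KG → ℤ) × (KG ⧸ J3 → ℤ)

lemma h1Trivial_permLattice : H1Trivial KG PermLattice :=
  .prod (fun _ => IsOneCocycle.isOneCoboundary_of_isPretransitive)
    (.prod (fun _ => IsOneCocycle.isOneCoboundary_of_isPretransitive)
      (fun _ => IsOneCocycle.isOneCoboundary_of_isPretransitive))

def sumJ3 (φ : KG → ℤ) : KG ⧸ J3 → ℤ :=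
  Quotient.lift (fun x => φ x + φ (x * (g₁ * g₂))) fun x y hxy => by
    have : y = x ∨ y = x * (g₁ * g₂) := by
      revert x y; simp only [QuotientGroup.leftRel_apply, J3, MonoidHom.mem_ker]; decide
    rcases this with rfl | rfl
    · rfl
    · rw [mul_assoc, g₁_mul_g₂_mul_g₁_mul_g₂, mul_one, add_comm]

lemma sumJ3_mk (φ : KG → ℤ) (x : KG) : sumJ3 φ x = φ x + φ (x * (g₁ * g₂)) := rfl

/-- `J₁` is a set of representatives of `G/J₃`. -/
noncomputable def extendJ1 (ψ : KG ⧸ J3 → ℤ) (x : KG) : ℤ :=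
  open scoped Classical in if x ∈ J1 then ψ x else 0

lemma sumJ3_extendJ1 (ψ : KG ⧸ J3 → ℤ) : sumJ3 (extendJ1 ψ) = ψ := by
  funext c
  induction c using QuotientGroup.induction_on with
  | H x =>
    have hiff : x * (g₁ * g₂) ∈ J1 ↔ x ∉ J1 := by
      rw [← mul_assoc, mul_g₂_mem_J1_iff, mul_g₁_mem_J1_iff]
    by_cases hx : x ∈ J1
    · simp only [sumJ3_mk, extendJ1, if_pos hx, if_neg fun h => hiff.mp h hx, add_zero]
    · simp only [sumJ3_mk, extendJ1, if_pos (hiff.mpr hx), if_neg hx, mk_mul_g₁_g₂_J3, zero_add]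

noncomputable def toPerm : DK →+ PermLattice :=
  AddMonoidHom.mk' (fun d =>
    (fun x => d.1 (x, x) - d.1 (x, x * g₁) - d.2.1 (x, x) + d.2.1 (x, x * g₁),
     fun x => d.2.1 (x, x) - d.2.1 (x, x * g₂) - d.1 (x, x) + d.1 (x, x * g₂),
     fun c => sumJ3 (fun x => d.1 (x, x) + d.2.1 (x, x * g₁)) c + d.2.2 ())) fun d e => by
    refine Prod.ext (funext fun x => ?_) (Prod.ext (funext fun x => ?_) (funext fun c => ?_))
    · simp only [Prod.fst_add, Prod.snd_add, Pi.add_apply]; ring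
    · simp only [Prod.fst_add, Prod.snd_add, Pi.add_apply]; ring
    · induction c using QuotientGroup.induction_on with
      | H x => simp only [Prod.fst_add, Prod.snd_add, Pi.add_apply, sumJ3_mk]; ring

lemma toPerm_smul (g : KG) (d : DK) : toPerm (g • d) = g • toPerm d := by
  refine Prod.ext (funext fun x => ?_) (Prod.ext (funext fun x => ?_) (funext fun c => ?_))
  on_goal 3 => induction c using QuotientGroup.induction_on
  all_goals
    simp only [toPerm, AddMonoidHom.mk'_apply, Prod.smul_fst, Prod.smul_snd,
      funAction_smul_apply, Prod.smul_mk, MulAction.Quotient.smul_mk, smul_eq_mul, sumJ3_mk,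
      mul_assoc]

lemma toPerm_fK (y : (KG ⧸ J1 → ℤ) × (KG ⧸ J2 → ℤ)) : toPerm (fK y) = 0 := by
  refine Prod.ext (funext fun x => ?_) (Prod.ext (funext fun x => ?_) (funext fun c => ?_))
  · change y.1 x - y.1 x - y.2 x + y.2 x = 0
    ring
  · change y.2 x - y.2 x - y.1 x + y.1 x = 0
    ring
  · induction c using QuotientGroup.induction_on with
    | H x =>
      change y.1 x + y.2 x + (y.1 ↑(x * (g₁ * g₂)) + y.2 ↑(x * (g₁ * g₂)))
        - ((∑ᶠ τ, y.1 τ) + ∑ᶠ τ, y.2 τ) = 0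
      rw [finsum_J1 _ x, finsum_J2 _ x, mk_mul_g₁_g₂_J1, mk_mul_g₁_g₂_J2]
      ring

lemma toPerm_j0 (z : KG → ℤ) : toPerm (j0 z) = 0 := by
  refine Prod.ext (funext fun x => ?_) (Prod.ext (funext fun x => ?_) (funext fun c => ?_))
  · change -z x - -z (x * g₁) - -z x + -z (x * g₁) = 0
    ring
  · change -z x - -z (x * g₂) - -z x + -z (x * g₂) = 0
    ring
  · induction c using QuotientGroup.induction_on with
    | H x =>
      change -z x + -z (x * g₁) + (-z (x * (g₁ * g₂)) + -z (x * (g₁ * g₂) * g₁))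
        + ∑ᶠ g, z g = 0
      rw [finsum_KG _ x, mul_g₁_g₂_mul_g₁]
      ring

noncomputable def ofPerm (n : PermLattice) : DK :=
  open scoped Classical in
  (fun p => if p.1 = (p.2 : KG ⧸ J1) then extendJ1 n.2.2 p.2
    else extendJ1 n.2.2 (p.2 * g₁) - n.1 (p.2 * g₁),
   fun p => if p.1 = (p.2 : KG ⧸ J2) then 0
    else extendJ1 n.2.2 p.2 - extendJ1 n.2.2 (p.2 * g₂) - n.2.1 (p.2 * g₂),
   0)

section OfPermApply

variable (n : PermLattice) (x : KG)

lemma ofPerm_fst_self : (ofPerm n).1 (x, x) = extendJ1 n.2.2 x := if_pos rfl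

lemma ofPerm_fst_mul_g₁ : (ofPerm n).1 (x, x * g₁) = extendJ1 n.2.2 x - n.1 x :=
  (if_neg (mk_ne_mk_mul_g₁_J1 x)).trans (by rw [mul_g₁_mul_g₁])

lemma ofPerm_fst_mul_g₂ : (ofPerm n).1 (x, x * g₂) = extendJ1 n.2.2 (x * g₂) :=
  if_pos (mk_mul_g₂_J1 x).symm

lemma ofPerm_snd_self : (ofPerm n).2.1 (x, x) = 0 := if_pos rfl

lemma ofPerm_snd_mul_g₁ : (ofPerm n).2.1 (x, x * g₁) = 0 := if_pos (mk_mul_g₁_J2 x).symm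

lemma ofPerm_snd_mul_g₂ :
    (ofPerm n).2.1 (x, x * g₂) = extendJ1 n.2.2 (x * g₂) - extendJ1 n.2.2 x - n.2.1 x :=
  (if_neg (mk_ne_mk_mul_g₂_J2 x)).trans (by rw [mul_g₂_mul_g₂])

lemma ofPerm_thd : (ofPerm n).2.2 = 0 := rfl

end OfPermApply

lemma toPerm_ofPerm (n : PermLattice) : toPerm (ofPerm n) = n := by
  refine Prod.ext (funext fun x => ?_) (Prod.ext (funext fun x => ?_) ?_)
  · change (ofPerm n).1 (x, x) - (ofPerm n).1 (x, x * g₁) - (ofPerm n).2.1 (x, x)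
      + (ofPerm n).2.1 (x, x * g₁) = n.1 x
    rw [ofPerm_fst_self, ofPerm_fst_mul_g₁, ofPerm_snd_self, ofPerm_snd_mul_g₁]
    ring
  · change (ofPerm n).2.1 (x, x) - (ofPerm n).2.1 (x, x * g₂) - (ofPerm n).1 (x, x)
      + (ofPerm n).1 (x, x * g₂) = n.2.1 x
    rw [ofPerm_fst_self, ofPerm_fst_mul_g₂, ofPerm_snd_self, ofPerm_snd_mul_g₂]
    ring
  · change sumJ3 (fun x => (ofPerm n).1 (x, x) + (ofPerm n).2.1 (x, x * g₁)) + 0 = n.2.2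
    simp only [ofPerm_fst_self, ofPerm_snd_mul_g₁, add_zero, sumJ3_extendJ1]

/-- The witness is the solution of this linear system normalised by `y.1 (g₁ J₁) = 0`. -/
lemma exists_sub_ofPerm_toPerm_eq (d : DK) : ∃ y z, d - ofPerm (toPerm d) = fK y + j0 z := by
  classical
  let y₁ : KG ⧸ J1 → ℤ := fun τ => if τ = ((g₁ : KG) : KG ⧸ J1) then 0 else
    -(d.1 (g₁, g₁ * g₂) + d.2.1 (g₂, g₂) + d.2.2 () + d.1 (g₁, g₁) + d.2.1 ((1 : KG), 1))
  let y₂ : KG ⧸ J2 → ℤ := fun τ => if τ = ((1 : KG) : KG ⧸ J2)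
    then d.2.1 ((1 : KG), g₁) - d.1 (g₁, g₁) else d.2.1 (g₂, g₁ * g₂) - d.1 (g₁, g₁ * g₂)
  refine ⟨(y₁, y₂), fun σ => y₂ σ - d.2.1 (σ, σ),
    Prod.ext (funext fun p => ?_) (Prod.ext (funext fun p => ?_) (funext fun _ => ?_))⟩
  all_goals first
    | obtain ⟨x, rfl | rfl⟩ := J1_pair_cases p
    | obtain ⟨x, rfl | rfl⟩ := J2_pair_cases p
    | skip
  all_goals
    simp only [Prod.fst_sub, Prod.snd_sub, Pi.sub_apply, ofPerm_fst_self, ofPerm_fst_mul_g₁,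
      ofPerm_snd_self, ofPerm_snd_mul_g₂, ofPerm_thd]
  all_goals try rcases KG_cases x with rfl | rfl | rfl | rfl
  all_goals
    simp only [y₁, y₂, extendJ1, toPerm, fK_apply, j0, AddMonoidHom.mk'_apply, Prod.fst_add,
      Prod.snd_add, Pi.add_apply, Pi.zero_apply, sumJ3_mk, finsum_J1 (x := 1),
      finsum_J2 (x := 1), finsum_KG (x := 1), one_mul, g₁_mul_g₁, g₂_mul_g₂,
      g₂_mul_g₁, g₁_mul_g₂_mul_g₁, g₁_mul_g₂_mul_g₂, g₁_mul_g₁_mul_g₂, g₂_mul_g₁_mul_g₂,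
      g₁_mul_g₂_mul_g₁_mul_g₂, one_mem_J1, g₁_notMem_J1, g₂_mem_J1, g₁_mul_g₂_notMem_J1,
      mk_g₂_J1, mk_g₁_g₂_J1, mk_g₁_J2, mk_g₁_g₂_J2, mk_one_ne_mk_g₁_J1, mk_g₂_ne_mk_one_J2,
      if_true, if_false]
    ring

end Splitting

section Descent

lemma j0_smul (g : KG) (z : KG → ℤ) : j0 (g • z) = g • j0 z := by
  refine Prod.ext rfl (Prod.ext rfl (funext fun _ => ?_))
  exact finsum_eq_of_bijective (g⁻¹ • ·) (MulAction.bijective g⁻¹) fun _ => rfl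

lemma jmap_mk (z : KG → ℤ) : jmap (z : TT KG) = (j0 z : TK) := rfl

lemma jmap_smul (g : KG) (x : TT KG) : jmap (g • x) = g • jmap x := by
  induction x using QuotientAddGroup.induction_on with
  | H z => rw [TT_smul_mk, jmap_mk, jmap_mk, TK_smul_mk, j0_smul]

lemma jmap_injective : Function.Injective jmap := by
  refine (injective_iff_map_eq_zero _).mpr fun x hx => ?_
  induction x using QuotientAddGroup.induction_on with
  | H z =>
    rw [jmap_mk, QuotientAddGroup.eq_zero_iff] at hx
    obtain ⟨w, hw⟩ := hx
    have hz : ∀ σ, z σ = -w.1 ((1 : KG) : KG ⧸ J1) := fun σ => by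
      have := congrFun (congrArg Prod.fst hw) (((1 : KG) : KG ⧸ J1), σ)
      change w.1 ((1 : KG) : KG ⧸ J1) = -z σ at this
      omega
    rw [QuotientAddGroup.eq_zero_iff]
    exact AddSubgroup.mem_zmultiples_iff.mpr ⟨-w.1 ((1 : KG) : KG ⧸ J1),
      funext fun σ => by simp [normElt, hz σ]⟩

noncomputable def toPermTK : TK →+ PermLattice :=
  QuotientAddGroup.lift fK.range toPerm (by rintro _ ⟨y, rfl⟩; exact toPerm_fK y)

lemma toPermTK_mk (d : DK) : toPermTK (d : TK) = toPerm d := rfl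

lemma toPermTK_smul (g : KG) (x : TK) : toPermTK (g • x) = g • toPermTK x := by
  induction x using QuotientAddGroup.induction_on with
  | H d => rw [TK_smul_mk, toPermTK_mk, toPermTK_mk, toPerm_smul]

lemma toPermTK_jmap (x : TT KG) : toPermTK (jmap x) = 0 := by
  induction x using QuotientAddGroup.induction_on with
  | H z => rw [jmap_mk, toPermTK_mk, toPerm_j0]

lemma sub_ofPerm_toPermTK_mem_range (x : TK) :
    x - (ofPerm (toPermTK x) : TK) ∈ jmap.range := by
  induction x using QuotientAddGroup.induction_on with
  | H d =>
    obtain ⟨y, z, hyz⟩ := exists_sub_ofPerm_toPerm_eq d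
    refine ⟨z, ?_⟩
    rw [jmap_mk, toPermTK_mk, ← QuotientAddGroup.mk_sub, hyz, QuotientAddGroup.mk_add,
      (QuotientAddGroup.eq_zero_iff _).mpr (AddMonoidHom.mem_range.mpr ⟨y, rfl⟩), zero_add]

end Descent

theorem stmt5_general (f2 : KG → KG → TT KG)
    (h : IsTwoCoboundary (fun a b => jmap (f2 a b))) :
    IsTwoCoboundary f2 :=
  IsTwoCoboundary.of_comp jmap jmap_injective jmap_smul
    (fun _ ha => exists_sub_smul_sub_mem_range jmap toPermTK (fun n => (ofPerm n : TK))
      toPermTK_smul toPermTK_jmap toPerm_ofPerm sub_ofPerm_toPermTK_mem_range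
      h1Trivial_permLattice ha) h

/-- For the Klein four-group `G = C₂ × C₂`, the lattices
`T = ℤ[G]/(ℤ·N_G)` and `T' = coker(f : ℤ[G/J₁] ⊕ ℤ[G/J₂] → D)`, and the induced
`G`-module map `j : T → T'`, the homomorphism `H²(G, T) → H²(G, T')` induced by `j` is
injective.  (Expressed at the level of cocycles: a 2-cocycle of `G` with values in `T`
whose image under `j` is a 2-coboundary is itself a 2-coboundary.) -/
theorem stmt5 (f2 : KG → KG → TT KG) (hf : IsTwoCocycle f2)
    (h : IsTwoCoboundary (fun a b => jmap (f2 a b))) :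
    IsTwoCoboundary f2 :=
  stmt5_general f2 h

end Normic
end

section
/- There exists a ∈ C' such that 2·c_χ(τ) = τ·a − a for every τ ∈ Q; in other words, twice the class of the 1-cocycle c_χ in H¹(Q, C') is zero. -/
/-- ℚ/ℤ as an additive group. -/
noncomputable abbrev QZ : Type := AddCircle (1 : ℚ)

/-!
The constant cocycle `c_χ` is the coboundary of `-χ ∈ M`. The function `-χ` need not lie in `C'`,
but `-2χ` does: `Σ_σ χ(σ)` is unchanged by the reindexing `σ ↦ σ⁻¹`, which also negates it,
so `Σ_σ 2χ(σ) = 0`.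
-/

theorem MonoidHom.prod_pow_two_eq_one {Q A : Type*} [Group Q] [Fintype Q] [CommGroup A]
    (χ : Q →* A) : ∏ σ, χ σ ^ 2 = 1 := by
  have prod_inv : ∏ σ, χ σ⁻¹ = ∏ σ, χ σ := Fintype.prod_equiv (Equiv.inv Q) _ _ fun _ => rfl
  calc ∏ σ, χ σ ^ 2 = (∏ σ, χ σ) * ∏ σ, χ σ⁻¹ := by
        rw [prod_inv, ← Finset.prod_mul_distrib]; simp only [sq]
    _ = ∏ σ, χ (σ * σ⁻¹) := by rw [← Finset.prod_mul_distrib]; simp only [map_mul]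
    _ = 1 := by simp only [mul_inv_cancel, map_one, Finset.prod_const_one]

theorem MonoidHom.map_eq_inv_map_inv_mul_mul {Q A : Type*} [Group Q] [CommGroup A]
    (χ : Q →* A) (τ σ : Q) : χ τ = (χ (τ⁻¹ * σ))⁻¹ * χ σ := by
  rw [map_mul, map_inv, mul_inv, inv_inv, mul_assoc, inv_mul_cancel, mul_one]

theorem stmt6_general (Q H : Type*) [Group Q] [Finite Q] [Group H]
    (l e' : ℕ)
    (χ : Q →* (H →* Multiplicative QZ)) :
    ∃ a : Q → (H →* Multiplicative QZ),
      (∀ h : H, h ^ e' = 1 → l • ∑ᶠ σ : Q, Multiplicative.toAdd (a σ h) = 0) ∧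
      ∀ τ σ : Q, (χ τ) ^ 2 = a (τ⁻¹ * σ) * (a σ)⁻¹ := by
  cases nonempty_fintype Q
  refine ⟨fun σ => (χ σ ^ 2)⁻¹, fun h _ => ?_, fun τ σ => ?_⟩
  · have sum_eq_zero : ∑ σ, Multiplicative.toAdd ((χ σ ^ 2)⁻¹ h) = 0 := by
      rw [← toAdd_prod, ← MonoidHom.finsetProd_apply, Finset.prod_inv_distrib,
        χ.prod_pow_two_eq_one]
      rfl
    rw [finsum_eq_sum_of_fintype, sum_eq_zero, smul_zero]
  · rw [inv_inv]
    exact (χ ^ 2).map_eq_inv_map_inv_mul_mul τ σ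

/-- Let `Q, H` be finite groups, `l, e'` positive integers with `e' ∣ l·|Q|`,
and let `A = Hom(H, ℚ/ℤ)` with trivial `Q`-action.  For any homomorphism `χ : Q → A`, the
1-cocycle `c_χ : Q → M` (where `M = Q → A` with the left translation action
`(τ • f) σ = f (τ⁻¹σ)`) given by `c_χ τ = (constant function χ τ)` satisfies: twice `c_χ`
is the coboundary of some element `a` of the submodule
`C' = {f : Q → A | ∀ h ∈ H with h^{e'} = 1, l·Σ_{σ∈Q} f(σ)(h) = 0}`.
(Here `A` is written multiplicatively, so `2·x` is `x^2` and `τ·a − a` is `(τ•a) * a⁻¹`.) -/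
theorem stmt6 (Q H : Type*) [Group Q] [Finite Q] [Group H] [Finite H]
    (l e' : ℕ) (hl : 0 < l) (he' : 0 < e') (hdvd : e' ∣ l * Nat.card Q)
    (χ : Q →* (H →* Multiplicative QZ)) :
    ∃ a : Q → (H →* Multiplicative QZ),
      (∀ h : H, h ^ e' = 1 → l • ∑ᶠ σ : Q, Multiplicative.toAdd (a σ h) = 0) ∧
      ∀ τ σ : Q, (χ τ) ^ 2 = a (τ⁻¹ * σ) * (a σ)⁻¹ :=
  stmt6_general Q H l e' χ
end

section
/- Let r be the order of χ as an element of the group Hom(Q, A) (r divides |Q|), and for h ∈ H let χ_h : Q → ℚ/ℤ denote the homomorphism σ ↦ χ(σ)(h). If r is odd, or if for every h ∈ H with h^{e'} = 1 the integer l·#ker(χ_h) is even, then there exists a ∈ C' such that c_χ(τ) = τ·a − a for every τ ∈ Q; in other words, the class of c_χ in H¹(Q, C') is zero. -/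
/-!
Take `a σ = (χ σ)⁻¹`; the coboundary identity then holds because `A` is abelian, and `a ∈ C'`
amounts to `l · Σ_σ χ_h(σ) = 0`. Grouping `Q` into the fibres of `χ_h`, that sum is
`#ker χ_h` times the sum `T` of the finite subgroup `χ_h(Q)` of `ℚ/ℤ`, and `2T = 0` because the
subgroup is stable under negation. Hence the sum is killed by `2`, and by `r` since each of its
terms is; either hypothesis then makes `l` times it vanish.
-/

theorem Fintype.sq_prod_id_eq_one {G : Type*} [CommGroup G] [Fintype G] :
    (∏ g : G, g) ^ 2 = 1 := by
  rw [sq, mul_eq_one_iff_eq_inv, ← Finset.prod_inv_distrib]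
  exact Fintype.prod_equiv (Equiv.inv G) _ _ fun g => (inv_inv g).symm

namespace MonoidHom

variable {G M : Type*} [Group G] [Fintype G] [CommGroup M]

theorem prod_univ_eq_prod_range_pow [DecidableEq M] (f : G →* M) :
    ∏ σ, f σ = (∏ b : f.range, (b : M)) ^ Nat.card f.ker := by
  change ∏ σ, ((f.rangeRestrict σ : f.range) : M) = _
  rw [← Fintype.prod_fiberwise' f.rangeRestrict, ← Finset.prod_pow]
  refine Fintype.prod_congr _ _ fun b => ?_
  rw [Finset.prod_const, Finset.card_univ, ← Nat.card_eq_fintype_card, ← ker_rangeRestrict]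
  exact congrArg _ (Nat.card_congr (fiberEquivKerOfSurjective f.rangeRestrict_surjective b))

theorem sq_prod_range_eq_one [DecidableEq M] (f : G →* M) : (∏ b : f.range, (b : M)) ^ 2 = 1 := by
  exact_mod_cast congrArg Subtype.val (Fintype.sq_prod_id_eq_one (G := f.range))

theorem sq_prod_univ_eq_one (f : G →* M) : (∏ σ, f σ) ^ 2 = 1 := by
  classical
  rw [prod_univ_eq_prod_range_pow, ← pow_mul, mul_comm, pow_mul, sq_prod_range_eq_one, one_pow]

theorem prod_univ_eq_one_of_odd_of_pow_eq_one {f : G →* M} {r : ℕ} (hr : Odd r) (hf : f ^ r = 1) :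
    ∏ σ, f σ = 1 := by
  have hr' : (∏ σ, f σ) ^ r = 1 := by
    rw [← Finset.prod_pow]
    exact Finset.prod_eq_one fun σ _ => by rw [← pow_apply, hf, one_apply]
  obtain ⟨m, rfl⟩ := hr
  rwa [pow_succ, pow_mul, f.sq_prod_univ_eq_one, one_pow, one_mul] at hr'

theorem pow_prod_univ_eq_one_of_even {f : G →* M} {l : ℕ} (hl : Even (l * Nat.card f.ker)) :
    (∏ σ, f σ) ^ l = 1 := by
  classical
  obtain ⟨m, hm⟩ := even_iff_two_dvd.mp hl
  rw [prod_univ_eq_prod_range_pow, ← pow_mul, mul_comm, hm, pow_mul, sq_prod_range_eq_one, one_pow]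

end MonoidHom

theorem stmt7_general (Q H : Type*) [Group Q] [Finite Q] [Group H]
    (l e' : ℕ)
    (χ : Q →* (H →* Multiplicative QZ))
    (hyp : Odd (orderOf χ) ∨
      ∀ h : H, h ^ e' = 1 → Even (l * Nat.card {σ : Q // χ σ h = 1})) :
    ∃ a : Q → (H →* Multiplicative QZ),
      (∀ h : H, h ^ e' = 1 → l • ∑ᶠ σ : Q, Multiplicative.toAdd (a σ h) = 0) ∧
      ∀ τ σ : Q, χ τ = a (τ⁻¹ * σ) * (a σ)⁻¹ := by
  have := Fintype.ofFinite Q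
  refine ⟨fun σ => (χ σ)⁻¹, fun h hh => ?_, fun τ σ => ?_⟩
  · let χ_h := (MonoidHom.eval h).comp χ
    have key : (∏ σ, χ_h σ) ^ l = 1 := by
      rcases hyp with hodd | heven
      · have hχ_h : χ_h ^ orderOf χ = 1 := by
          ext σ
          change (χ σ h) ^ orderOf χ = 1
          rw [← MonoidHom.pow_apply, ← MonoidHom.pow_apply, pow_orderOf_eq_one]
          rfl
        rw [MonoidHom.prod_univ_eq_one_of_odd_of_pow_eq_one hodd hχ_h, one_pow]
      · exact MonoidHom.pow_prod_univ_eq_one_of_even (heven h hh)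
    simp only [finsum_eq_sum_of_fintype, MonoidHom.inv_apply, toAdd_inv, Finset.sum_neg_distrib,
      smul_neg, ← toAdd_prod, ← toAdd_pow]
    rw [neg_eq_zero]
    exact congrArg Multiplicative.toAdd key
  · change χ τ = (χ (τ⁻¹ * σ))⁻¹ * (χ σ)⁻¹⁻¹
    rw [map_mul, map_inv, mul_inv_rev, inv_inv, inv_inv, inv_mul_cancel_comm]

/-- Let `Q, H` be finite groups, `l, e'` positive integers with `e' ∣ l·|Q|`,
`A = Hom(H, ℚ/ℤ)` with trivial `Q`-action, and `χ : Q → A` a homomorphism of order `r`.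
For `h ∈ H` let `χ_h : Q → ℚ/ℤ` be `σ ↦ χ(σ)(h)`.  If `r` is odd, or if for every `h ∈ H`
with `h^{e'} = 1` the integer `l·#ker(χ_h)` is even, then the 1-cocycle
`c_χ : τ ↦ (constant function χ τ)` on `M = Q → A` (left translation action) is the
coboundary of some element `a` of
`C' = {f : Q → A | ∀ h ∈ H with h^{e'} = 1, l·Σ_{σ∈Q} f(σ)(h) = 0}`.
(Here `A` is written multiplicatively, so `τ·a − a` is `(τ•a) * a⁻¹`.) -/
theorem stmt7 (Q H : Type*) [Group Q] [Finite Q] [Group H] [Finite H]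
    (l e' : ℕ) (hl : 0 < l) (he' : 0 < e') (hdvd : e' ∣ l * Nat.card Q)
    (χ : Q →* (H →* Multiplicative QZ))
    (hyp : Odd (orderOf χ) ∨
      ∀ h : H, h ^ e' = 1 → Even (l * Nat.card {σ : Q // χ σ h = 1})) :
    ∃ a : Q → (H →* Multiplicative QZ),
      (∀ h : H, h ^ e' = 1 → l • ∑ᶠ σ : Q, Multiplicative.toAdd (a σ h) = 0) ∧
      ∀ τ σ : Q, χ τ = a (τ⁻¹ * σ) * (a σ)⁻¹ :=
  stmt7_general Q H l e' χ hyp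
end

section
/- Let χ : Q → A be a homomorphism such that χ(γ) has order exactly 2^s. Then the 1-cocycle c : Q → Θ defined by c(τ)(σ) = χ(τ) (a constant function of σ, which indeed lies in Θ) is not a coboundary: there exists no a ∈ Θ with c(τ) = τ·a − a for all τ ∈ Q. Equivalently, the class of c in H¹(Q, Θ) is nonzero. -/
/-! The coboundary equation at `τ = γ` forces `a (γ ^ k) = a 1 - k • χ(γ)`, so the condition
`∑ a = 0` reads `2 ^ s • a 1 - (0 + 1 + ⋯ + (2 ^ s - 1)) • χ(γ) = 0`. The first term
vanishes since `2 ^ s • A = 0`, while the coefficient `2 ^ (s - 1) * (2 ^ s - 1)` of the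
second is not divisible by the order `2 ^ s` of `χ(γ)`. -/

open Finset

theorem sum_range_id_nsmul_ne_zero_of_addOrderOf_eq_two_mul {A : Type*} [AddMonoid A]
    {x : A} {m : ℕ} (hm : 0 < m) (hx : addOrderOf x = 2 * m) :
    (∑ k ∈ range (addOrderOf x), k) • x ≠ 0 := by
  intro hzero
  have hgauss : ∑ k ∈ range (2 * m), k = m * (2 * m - 1) := by
    rw [sum_range_id, mul_assoc, Nat.mul_div_cancel_left _ two_pos]
  have hdvd := addOrderOf_dvd_of_nsmul_eq_zero hzero
  rw [hx, hgauss] at hdvd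
  have : 2 ∣ 2 * m - 1 := (Nat.mul_dvd_mul_iff_left hm).1 (by rwa [mul_comm m 2])
  omega

theorem sum_univ_eq_sum_range_pow_orderOf {G M : Type*} [Group G] [Fintype G] [AddCommMonoid M]
    {γ : G} (hγ : ∀ x, x ∈ Subgroup.zpowers γ) (f : G → M) :
    ∑ σ, f σ = ∑ k ∈ range (orderOf γ), f (γ ^ k) := by
  classical
  rw [← IsCyclic.image_range_orderOf hγ, sum_image]
  intro i hi j hj hij
  exact pow_injOn_Iio_orderOf (by simpa using hi) (by simpa using hj) hij

theorem apply_pow_eq_sub_nsmul {G A : Type*} [Group G] [AddCommGroup A] {a : G → A} {γ : G}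
    {x : A} (h : ∀ σ, x = a (γ⁻¹ * σ) - a σ) (k : ℕ) : a (γ ^ k) = a 1 - k • x := by
  induction k with
  | zero => simp
  | succ k ih =>
    have hstep := h (γ ^ (k + 1))
    rw [pow_succ', inv_mul_cancel_left, ← pow_succ'] at hstep
    rw [succ_nsmul, ← sub_sub, ← ih, hstep, sub_sub_cancel]

/-- Let `s ≥ 1`, let `Q` be cyclic of order `2^s` with generator `γ`, and let
`A` be an abelian group with `2^s·A = 0`, regarded with the trivial `Q`-action.  Let
`Θ = {f : Q → A | Σ_{σ∈Q} f(σ) = 0}`, a `Q`-submodule of the module of functions `Q → A`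
with the left translation action `(τ • f) σ = f (τ⁻¹σ)`.  If `χ : Q → A` is a homomorphism
with `χ(γ)` of order exactly `2^s`, then the 1-cocycle `c : τ ↦ (constant function χ τ)`
with values in `Θ` is not a coboundary: there is no `a ∈ Θ` with `c τ = τ·a − a` for all
`τ ∈ Q`. -/
theorem stmt8 (s : ℕ) (hs : 1 ≤ s) (Q : Type*) [Group Q] (γ : Q)
    (hgen : ∀ x : Q, x ∈ Subgroup.zpowers γ) (hcard : Nat.card Q = 2 ^ s)
    (A : Type*) [AddCommGroup A] (hA : ∀ a : A, 2 ^ s • a = 0)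
    (χ : Q →* Multiplicative A)
    (hχγ : addOrderOf (Multiplicative.toAdd (χ γ)) = 2 ^ s) :
    ¬ ∃ a : Q → A, (∑ᶠ σ : Q, a σ = 0) ∧
        ∀ τ σ : Q, Multiplicative.toAdd (χ τ) = a (τ⁻¹ * σ) - a σ := by
  rintro ⟨a, hsum, h⟩
  have : Fintype Q := @Fintype.ofFinite Q (Nat.finite_of_card_ne_zero (by simp [hcard]))
  set x := Multiplicative.toAdd (χ γ)
  have horder : orderOf γ = addOrderOf x := by
    rw [orderOf_eq_card_of_forall_mem_zpowers hgen, hcard, hχγ]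
  have hzero : (∑ k ∈ range (addOrderOf x), k) • x = 0 := by
    rw [finsum_eq_sum_of_fintype, sum_univ_eq_sum_range_pow_orderOf hgen, horder] at hsum
    simpa only [apply_pow_eq_sub_nsmul (h γ), sum_sub_distrib, sum_const, card_range, hχγ, hA,
      zero_sub, neg_eq_zero, sum_smul] using hsum
  refine sum_range_id_nsmul_ne_zero_of_addOrderOf_eq_two_mul (m := 2 ^ (s - 1)) (by positivity) ?_
    hzero
  rw [hχγ, ← pow_succ', Nat.sub_add_cancel hs]
end

section
/- For every homomorphism χ : H → ℚ/ℤ, the corestriction Cor_{H/G}(χ) ∈ H¹(G, ℚ/ℤ) = Hom(G, ℚ/ℤ) — that is, the composition of the transfer homomorphism G → H with χ — is the zero homomorphism. -/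
/-- The rotation subgroup of the dihedral group: the cyclic subgroup of order `n`
consisting of the rotations `r i`. -/
def rotations (n : ℕ) : Subgroup (DihedralGroup n) where
  carrier := Set.range DihedralGroup.r
  one_mem' := ⟨0, rfl⟩
  mul_mem' := by
    rintro _ _ ⟨i, rfl⟩ ⟨j, rfl⟩
    exact ⟨i + j, (DihedralGroup.r_mul_r i j).symm⟩
  inv_mem' := by
    rintro _ ⟨i, rfl⟩
    exact ⟨-i, rfl⟩

/-! The transfer to a subgroup `H` of index two kills every involution `g ∉ H`: the coset
representatives `1, g` give `transfer ϕ g = ϕ (g ^ 2)`, and no conjugate of `g` lies in `H`.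
The dihedral group is generated by its reflections, which are such involutions. -/

namespace MonoidHom

theorem transfer_eq_one_of_sq_eq_one {G A : Type*} [Group G] [CommGroup A] {H : Subgroup G}
    [H.FiniteIndex] (ϕ : H →* A) (hH : H.index = 2) {g : G} (hg : g ∉ H) (hg2 : g ^ 2 = 1) :
    transfer ϕ g = 1 := by
  have hconj : ∀ (k : ℕ) (g₀ : G), g₀⁻¹ * g ^ k * g₀ ∈ H → g₀⁻¹ * g ^ k * g₀ = g ^ k := by
    intro k g₀ hk
    rw [pow_eq_pow_mod k hg2] at hk ⊢
    rcases Nat.mod_two_eq_zero_or_one k with h | h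
    · simp [h]
    · rw [h, pow_one] at hk
      have := (Subgroup.normal_of_index_eq_two hH).conj_mem _ hk g₀
      exact absurd (by simpa [mul_assoc] using this) hg
  rw [transfer_eq_pow ϕ g hconj]
  simp_rw [hH, hg2]
  exact map_one ϕ

end MonoidHom

namespace DihedralGroup

variable {n : ℕ}

theorem r_mem_rotations (i : ZMod n) : r i ∈ rotations n := ⟨i, rfl⟩

theorem sr_notMem_rotations (i : ZMod n) : sr i ∉ rotations n := by
  rintro ⟨j, hj⟩
  cases hj

theorem index_rotations : (rotations n).index = 2 := by
  refine Subgroup.index_eq_two_iff.mpr ⟨sr 0, ?_⟩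
  rintro (i | i)
  · simp [r_mul_sr, sr_notMem_rotations, r_mem_rotations]
  · simp [sr_mul_sr, sr_notMem_rotations, r_mem_rotations]

theorem r_eq_sr_mul_sr (i : ZMod n) : r i = sr 0 * sr i := by
  rw [sr_mul_sr, sub_zero]

end DihedralGroup

open DihedralGroup in
theorem stmt9_general (n : ℕ) [NeZero n]
    (χ : ↥(rotations n) →* Multiplicative QZ) :
    MonoidHom.transfer χ = 1 := by
  have transfer_sr (i : ZMod n) : MonoidHom.transfer χ (sr i) = 1 :=
    χ.transfer_eq_one_of_sq_eq_one index_rotations (sr_notMem_rotations i)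
      (by rw [sq, sr_mul_self])
  ext (i | i)
  · rw [r_eq_sr_mul_sr, map_mul, transfer_sr, transfer_sr, one_mul, MonoidHom.one_apply]
  · rw [transfer_sr, MonoidHom.one_apply]

/-- Let `n ≥ 1`, `G` the dihedral group of order `2n` and `H` its rotation
subgroup.  For every homomorphism `χ : H → ℚ/ℤ`, the corestriction
`Cor_{H/G}(χ) ∈ H¹(G, ℚ/ℤ) = Hom(G, ℚ/ℤ)`, i.e. the composition of the transfer map
`G → H` with `χ`, is the zero homomorphism. -/
theorem stmt9 (n : ℕ) [NeZero n] (hn : 1 ≤ n)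
    (χ : ↥(rotations n) →* Multiplicative QZ) :
    MonoidHom.transfer χ = 1 :=
  stmt9_general n χ
end

section
/- For every cyclic subgroup C of G, the cohomology group H²(C, T) vanishes, where C acts on T by restriction of the G-action. In particular, every class in H²(G, T) restricts to zero on every cyclic subgroup of G, i.e. Ш²_ω(G, T) = H²(G, T). -/
/-!
For a finite cyclic group `⟨s⟩` one has `H²(⟨s⟩, M) ≅ M^s / N_s M`: given a 2-cocycle `f`, the
element `∑ᵢ f(sⁱ, s)` is `s`-invariant, and writing it as a norm `N_s m` lets one integrate `f`
along the powers of `s` to a 1-cochain with coboundary `f`. So it suffices that every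
`s`-invariant element of `T` is a norm. A lift `d ∈ ℤ[G]` of an invariant class satisfies
`s • d - d = k N_G`; the left side has augmentation `0` and the right side `k |G|`, so `d` itself is
invariant. As `ℤ[G]` is free over `ℤ[⟨s⟩]`, its `s`-invariants are norms.
-/

namespace Normic

section Cohomology

variable {Γ M : Type*} [Group Γ] [AddCommGroup M] [DistribMulAction Γ M]

lemma IsTwoCoboundary.isTwoCocycle {f : Γ → Γ → M} (hf : IsTwoCoboundary f) :
    IsTwoCocycle f := by
  obtain ⟨a, ha⟩ := hf
  intro g h k
  simp only [ha, smul_add, smul_sub, smul_smul, mul_assoc]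
  abel

lemma IsTwoCocycle.sub {f₁ f₂ : Γ → Γ → M} (hf₁ : IsTwoCocycle f₁) (hf₂ : IsTwoCocycle f₂) :
    IsTwoCocycle (f₁ - f₂) := fun g h k => by
  simp only [Pi.sub_apply, smul_sub]
  linear_combination (norm := abel1) hf₁ g h k - hf₂ g h k

lemma IsTwoCoboundary.add {f₁ f₂ : Γ → Γ → M} (hf₁ : IsTwoCoboundary f₁)
    (hf₂ : IsTwoCoboundary f₂) : IsTwoCoboundary (f₁ + f₂) := by
  obtain ⟨a₁, ha₁⟩ := hf₁
  obtain ⟨a₂, ha₂⟩ := hf₂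
  refine ⟨a₁ + a₂, fun g h => ?_⟩
  simp only [Pi.add_apply, ha₁, ha₂, smul_add]
  abel

lemma isTwoCoboundary_smul_const (c : M) : IsTwoCoboundary (fun (g _ : Γ) => g • c) :=
  ⟨fun _ => c, fun g h => by abel⟩

lemma IsTwoCocycle.map_one_right {f : Γ → Γ → M} (hf : IsTwoCocycle f) (g : Γ) :
    f g 1 = g • f 1 1 := by
  have h := hf g 1 1
  simp only [mul_one] at h
  linear_combination (norm := abel1) -h

lemma IsTwoCocycle.restrict_s15 {f : Γ → Γ → M} (hf : IsTwoCocycle f) (H : Subgroup Γ) :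
    IsTwoCocycle (fun a b : H => f a b) :=
  fun g h k => hf g h k

noncomputable def zpowersNorm (s : Γ) (v : M) : M := ∑ i ∈ Finset.range (orderOf s), s ^ i • v

lemma zpowersNorm_subgroup_coe (H : Subgroup Γ) (s : H) (v : M) :
    zpowersNorm (s : Γ) v = zpowersNorm s v := by
  simp only [zpowersNorm, Subgroup.orderOf_coe]
  rfl

lemma IsTwoCocycle.smul_sum_range_pow {f : Γ → Γ → M} (hf : IsTwoCocycle f) {s : Γ} {n : ℕ}
    (hn : s ^ n = 1) :
    s • ∑ i ∈ Finset.range n, f (s ^ i) s = ∑ i ∈ Finset.range n, f (s ^ i) s := by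
  have hstep : ∀ i : ℕ, s • f (s ^ i) s = f (s ^ (i + 1)) s - (f s (s ^ (i + 1)) - f s (s ^ i)) :=
    fun i => by
      have h := hf s (s ^ i) s
      rw [← pow_succ', ← pow_succ] at h
      linear_combination (norm := abel1) h
  have hshift : ∑ i ∈ Finset.range n, f (s ^ (i + 1)) s = ∑ i ∈ Finset.range n, f (s ^ i) s := by
    have h := Finset.sum_range_succ' (fun i => f (s ^ i) s) n
    rw [Finset.sum_range_succ, hn, ← pow_zero s] at h
    exact add_right_cancel h.symm
  rw [Finset.smul_sum, Finset.sum_congr rfl fun i _ => hstep i, Finset.sum_sub_distrib,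
    Finset.sum_range_sub (fun i => f s (s ^ i)), hn, pow_zero, sub_self, sub_zero, hshift]

/-- When `N_s m = ∑_{i < ord s} f(sⁱ, s)`, the cochain `sᵏ ↦ -cocyclePartialSum f s m k` is well
defined and its coboundary is `f`. -/
def cocyclePartialSum (f : Γ → Γ → M) (s : Γ) (m : M) (k : ℕ) : M :=
  ∑ i ∈ Finset.range k, (f (s ^ i) s - s ^ i • m)

lemma cocyclePartialSum_add {f : Γ → Γ → M} (hf : IsTwoCocycle f) (hf1 : ∀ g, f g 1 = 0)
    (s : Γ) (m : M) (a b : ℕ) :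
    cocyclePartialSum f s m (a + b) =
      cocyclePartialSum f s m a + s ^ a • cocyclePartialSum f s m b + f (s ^ a) (s ^ b) := by
  induction b with
  | zero => simp [cocyclePartialSum, hf1]
  | succ b ih =>
    have h := hf (s ^ a) (s ^ b) s
    rw [← pow_add, ← pow_succ] at h
    simp only [cocyclePartialSum, ← add_assoc, Finset.sum_range_succ] at ih ⊢
    rw [ih, smul_add, smul_sub, smul_smul, ← pow_add]
    linear_combination (norm := abel1) -h

lemma IsTwoCocycle.isTwoCoboundary_of_map_one_right [Finite Γ] {f : Γ → Γ → M}
    (hf : IsTwoCocycle f) (hf1 : ∀ g, f g 1 = 0) {s : Γ} (hs : ∀ x, x ∈ Subgroup.zpowers s)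
    (hnorm : ∀ u : M, s • u = u → ∃ v, zpowersNorm s v = u) : IsTwoCoboundary f := by
  obtain ⟨m, hm⟩ := hnorm _ (hf.smul_sum_range_pow (pow_orderOf_eq_one s))
  have hP : Function.Periodic (cocyclePartialSum f s m) (orderOf s) := fun k => by
    have hPn : cocyclePartialSum f s m (orderOf s) = 0 := by
      simp only [cocyclePartialSum, Finset.sum_sub_distrib, ← hm, zpowersNorm, sub_self]
    rw [cocyclePartialSum_add hf hf1, hPn, pow_orderOf_eq_one, hf1, smul_zero, add_zero, add_zero]
  have hPeq : ∀ j k : ℕ, s ^ j = s ^ k → cocyclePartialSum f s m j = cocyclePartialSum f s m k :=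
    fun j k h => by rw [← hP.map_mod_nat j, ← hP.map_mod_nat k, pow_eq_pow_iff_modEq.mp h]
  have hlog : ∀ x, ∃ k : ℕ, s ^ k = x := fun x => mem_powers_iff_mem_zpowers.mpr (hs x)
  choose ℓ hℓ using hlog
  refine ⟨fun x => -cocyclePartialSum f s m (ℓ x), fun g h => ?_⟩
  have hadd := cocyclePartialSum_add hf hf1 s m (ℓ g) (ℓ h)
  rw [hℓ, hℓ, hPeq _ (ℓ (g * h)) (by rw [pow_add, hℓ, hℓ, hℓ])] at hadd
  simp only [smul_neg, hadd]
  abel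

lemma IsTwoCocycle.isTwoCoboundary_of_zpowers_s15 [Finite Γ] {f : Γ → Γ → M}
    (hf : IsTwoCocycle f) {s : Γ} (hs : ∀ x, x ∈ Subgroup.zpowers s)
    (hnorm : ∀ u : M, s • u = u → ∃ v, zpowersNorm s v = u) : IsTwoCoboundary f := by
  have hconst := isTwoCoboundary_smul_const (Γ := Γ) (f 1 1)
  have hnormalized : IsTwoCoboundary (f - fun g _ => g • f 1 1) :=
    (hf.sub hconst.isTwoCocycle).isTwoCoboundary_of_map_one_right
      (fun g => by simp [hf.map_one_right g]) hs hnorm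
  simpa using hnormalized.add hconst

end Cohomology

section Permutation

variable {Γ α M : Type*} [Group Γ] [MulAction Γ α] [AddCommGroup M]

lemma sum_smul_apply [Fintype α] (g : Γ) (d : α → M) : ∑ x, (g • d) x = ∑ x, d x :=
  Equiv.sum_comp (MulAction.toPerm g⁻¹) d

lemma exists_zpowersNorm_eq_of_smul_eq {G : Type*} [Group G] [Finite G] {s : G} {d : G → M}
    (hd : s • d = d) : ∃ e : G → M, zpowersNorm s e = d := by
  classical
  obtain ⟨T, hT, -⟩ := (Subgroup.zpowers s).exists_isComplement_right 1
  refine ⟨fun x => if x ∈ T then d x else 0, funext fun x => ?_⟩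
  obtain ⟨⟨h, hh⟩, hx, hunique⟩ := Subgroup.isComplement_iff_existsUnique_inv_mul_mem.mp hT x
  obtain ⟨i, hi, rfl⟩ : ∃ i < orderOf s, s ^ i = h := by
    simpa using mem_zpowers_iff_mem_range_orderOf.mp hh
  simp only [zpowersNorm, Finset.sum_apply, funAction_smul_apply, smul_eq_mul]
  rw [Finset.sum_eq_single_of_mem i (Finset.mem_range.mpr hi), if_pos hx]
  · have hdi := congrFun (MulAction.mem_fixedBy_zpow (g := s) hd i) x
    simpa [funAction_smul_apply] using hdi
  · intro j hj hji
    refine if_neg fun hjx => hji ?_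
    have hsj := congrArg Subtype.val
      (hunique ⟨s ^ j, Subgroup.pow_mem _ (Subgroup.mem_zpowers s) j⟩ hjx)
    exact pow_injOn_Iio_orderOf (Finset.mem_range.mp hj) hi hsj

end Permutation

section NormOneTorus

variable {G : Type*} [Group G] [Finite G]

lemma TT.smul_eq_of_smul_mk_eq {s : G} {d : G → ℤ}
    (hd : s • (QuotientAddGroup.mk d : TT G) = QuotientAddGroup.mk d) : s • d = d := by
  have := Fintype.ofFinite G
  rw [TT_smul_mk] at hd
  obtain ⟨k, hk⟩ := AddSubgroup.mem_zmultiples_iff.mp (QuotientAddGroup.eq.mp hd)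
  have hk0 : k = 0 := by
    have haug := congrArg (fun e : G → ℤ => ∑ x, e x) hk
    simpa [Finset.sum_add_distrib, sum_smul_apply, normElt, Fintype.card_ne_zero] using haug
  rw [hk0, zero_smul] at hk
  exact neg_add_eq_zero.mp hk.symm

lemma TT.exists_zpowersNorm_eq (s : G) (u : TT G) (hu : s • u = u) :
    ∃ v : TT G, zpowersNorm s v = u := by
  induction u using QuotientAddGroup.induction_on with
  | H d =>
    obtain ⟨e, he⟩ := exists_zpowersNorm_eq_of_smul_eq (TT.smul_eq_of_smul_mk_eq hu)
    refine ⟨QuotientAddGroup.mk e, ?_⟩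
    simp only [zpowersNorm, TT_smul_mk, ← QuotientAddGroup.mk_sum] at he ⊢
    rw [he]

end NormOneTorus

/-- Let `G` be a finite group and `T = ℤ[G]/(ℤ·N_G)` the character lattice
of the norm-one torus of `G`.  For every cyclic subgroup `C` of `G`, `H²(C, T) = 0`
(every 2-cocycle of `C` with values in `T` is a 2-coboundary); in particular every class
in `H²(G, T)` restricts to zero on every cyclic subgroup, i.e. `Ш²_ω(G, T) = H²(G, T)`. -/
theorem stmt15 (G : Type) [Group G] [Finite G] :
    (∀ C : Subgroup G, IsCyclic ↥C →
      ∀ f : ↥C → ↥C → TT G, IsTwoCocycle f → IsTwoCoboundary f) ∧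
    (∀ f : G → G → TT G, IsTwoCocycle f → ∀ C : Subgroup G, IsCyclic ↥C →
      IsTwoCoboundary (fun a b : ↥C => f ↑a ↑b)) := by
  have hcyclic : ∀ C : Subgroup G, IsCyclic ↥C →
      ∀ f : ↥C → ↥C → TT G, IsTwoCocycle f → IsTwoCoboundary f := by
    intro C hC f hf
    obtain ⟨σ, hσ⟩ := hC.exists_generator
    refine hf.isTwoCoboundary_of_zpowers_s15 hσ fun u hu => ?_
    simpa only [zpowersNorm_subgroup_coe] using TT.exists_zpowersNorm_eq (σ : G) u hu
  exact ⟨hcyclic, fun f hf C hC => hcyclic C hC _ (hf.restrict_s15 C)⟩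

end Normic
end

section
/- Let Q be a finite group and E a subgroup of Q, and let ℤ[Q/E] be the permutation module on the left cosets Q/E with Q acting by translation. If a class α ∈ H²(Q, ℤ[Q/E]) restricts to zero in H²(C, ℤ[Q/E]) for every cyclic subgroup C of Q, then α = 0; that is, Ш²_ω(Q, ℤ[Q/E]) = 0. -/
/-!
Evaluation at the base coset `↑1` realises Shapiro's isomorphism `H²(Q, M[Q ⧸ E]) ≅ H²(E, M)`:
using a transversal of `Q ⧸ E`, a cocycle whose evaluation is a coboundary on `E` is a coboundary.
It remains to see that a class of `H²(E, ℤ)` vanishing on all cyclic subgroups is zero. Summing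
the cocycle identity over one variable shows that `|E| • c` is the coboundary of
`S g = ∑ k, c g k`; on a cyclic subgroup `S` differs from `|E|` times a given primitive by a
homomorphism from a finite group to a torsion-free one, so the two agree. Hence `|E| • c` is `|E|`
times a coboundary, and `|E|` cancels.
-/

namespace Normic

open MulAction

section TrivialCoefficients

variable {G M : Type*} [Group G] [AddCommGroup M] {c : G → G → M}

def IsTrivialTwoCocycle (c : G → G → M) : Prop :=
  ∀ g h k : G, c h k - c (g * h) k + c g (h * k) - c g h = 0

def IsTrivialTwoCoboundary (c : G → G → M) : Prop :=
  ∃ β : G → M, ∀ g h : G, c g h = β h - β (g * h) + β g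

lemma IsTrivialTwoCoboundary.comp {K : Type*} [Group K] (hc : IsTrivialTwoCoboundary c)
    (φ : K →* G) : IsTrivialTwoCoboundary fun a b => c (φ a) (φ b) := by
  obtain ⟨β, hβ⟩ := hc
  exact ⟨β ∘ φ, fun a b => by simp only [hβ, Function.comp_apply, map_mul]⟩

lemma eq_zero_of_map_mul_eq_add [Finite G] [IsAddTorsionFree M] {T : G → M}
    (hT : ∀ x y, T (x * y) = T x + T y) (x : G) : T x = 0 := by
  let φ : G →* Multiplicative M := MonoidHom.mk' (fun x => .ofAdd (T x)) hT
  have hpow : φ x ^ Nat.card G = 1 := by rw [← map_pow, pow_card_eq_one', map_one]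
  exact (nsmul_eq_zero_iff_right Nat.card_pos.ne').mp (congrArg Multiplicative.toAdd hpow)

lemma IsTrivialTwoCocycle.card_smul_eq [Fintype G] (hc : IsTrivialTwoCocycle c) (g h : G) :
    Fintype.card G • c g h = (∑ k, c h k) - (∑ k, c (g * h) k) + ∑ k, c g k := by
  have hsum : ∑ k, (c h k - c (g * h) k + c g (h * k) - c g h) = 0 := by
    simp only [hc g h, Finset.sum_const_zero]
  have hshift : ∑ k, c g (h * k) = ∑ k, c g k := Equiv.sum_comp (Equiv.mulLeft h) (c g)
  rw [Finset.sum_sub_distrib, Finset.sum_add_distrib, Finset.sum_sub_distrib, hshift,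
    Finset.sum_const, Finset.card_univ] at hsum
  linear_combination (norm := module) -hsum

lemma IsTrivialTwoCocycle.sum_eq_card_smul [Fintype G] [IsAddTorsionFree M]
    (hc : IsTrivialTwoCocycle c) {g : G} {β : Subgroup.zpowers g → M}
    (hβ : ∀ a b : Subgroup.zpowers g, c a b = β b - β (a * b) + β a) :
    ∑ k, c g k = Fintype.card G • β ⟨g, Subgroup.mem_zpowers g⟩ := by
  let T : Subgroup.zpowers g → M := fun a => (∑ k, c a k) - Fintype.card G • β a
  have hT : ∀ a b, T (a * b) = T a + T b := fun a b => by
    have h := hc.card_smul_eq a b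
    rw [hβ a b] at h
    simp only [T, Subgroup.coe_mul]
    linear_combination (norm := module) h
  exact sub_eq_zero.mp (eq_zero_of_map_mul_eq_add hT ⟨g, Subgroup.mem_zpowers g⟩)

theorem IsTrivialTwoCocycle.isTrivialTwoCoboundary [Finite G] [IsAddTorsionFree M]
    (hc : IsTrivialTwoCocycle c)
    (hcyc : ∀ C : Subgroup G, IsCyclic C → IsTrivialTwoCoboundary fun a b : C => c a b) :
    IsTrivialTwoCoboundary c := by
  have := Fintype.ofFinite G
  choose β hβ using fun g : G => hcyc (Subgroup.zpowers g) inferInstance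
  refine ⟨fun g => β g ⟨g, Subgroup.mem_zpowers g⟩, fun g h => ?_⟩
  apply nsmul_right_injective (Fintype.card_ne_zero (α := G))
  simp only [hc.card_smul_eq g h, hc.sum_eq_card_smul (hβ _), smul_add, smul_sub]

end TrivialCoefficients

section Evaluation

variable {Γ α M : Type*} [Group Γ] [MulAction Γ α] [AddCommGroup M] {f : Γ → Γ → α → M}

lemma IsTwoCocycle.apply_inv_smul (hf : IsTwoCocycle f) (a b c : Γ) (x : α) :
    f b c (a⁻¹ • x) = f (a * b) c x - f a (b * c) x + f a b x := by
  have h := congrFun (hf a b c) x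
  simp only [Pi.add_apply, Pi.sub_apply, funAction_smul_apply, Pi.zero_apply] at h
  linear_combination (norm := module) h

lemma IsTwoCocycle.isTrivialTwoCocycle_restrict_apply (hf : IsTwoCocycle f) {H : Subgroup Γ}
    {x : α} (hx : ∀ h ∈ H, h • x = x) : IsTrivialTwoCocycle fun a b : H => f a b x := by
  intro a b c
  have h := hf.apply_inv_smul a b c x
  rw [hx _ (inv_mem a.2)] at h
  simp only [Subgroup.coe_mul, h]
  abel

lemma IsTwoCoboundary.isTrivialTwoCoboundary_apply (hf : IsTwoCoboundary f) {x : α}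
    (hx : ∀ g : Γ, g • x = x) : IsTrivialTwoCoboundary fun a b => f a b x := by
  obtain ⟨u, hu⟩ := hf
  exact ⟨fun g => u g x, fun g h => by
    simp only [hu, Pi.add_apply, Pi.sub_apply, funAction_smul_apply, hx]⟩

end Evaluation

section Shapiro

variable {Q M : Type*} [Group Q] {E : Subgroup Q} [AddCommGroup M]

lemma out_smul_mk_one (x : Q ⧸ E) : x.out • ((1 : Q) : Q ⧸ E) = x := by
  rw [Quotient.smul_mk, smul_eq_mul, mul_one, QuotientGroup.out_eq']

lemma smul_mk_one_of_mem {a : Q} (ha : a ∈ E) : a • ((1 : Q) : Q ⧸ E) = ((1 : Q) : Q ⧸ E) := by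
  rwa [← mem_stabilizer_iff, stabilizer_quotient]

noncomputable def transversalCocycle (g : Q) (x : Q ⧸ E) : Q := x.out⁻¹ * g * (g⁻¹ • x).out

lemma transversalCocycle_mem (g : Q) (x : Q ⧸ E) : transversalCocycle g x ∈ E := by
  have h : ((g * (g⁻¹ • x).out : Q) : Q ⧸ E) = ((x.out : Q) : Q ⧸ E) := by
    rw [← smul_eq_mul, ← Quotient.smul_mk, QuotientGroup.out_eq', QuotientGroup.out_eq',
      smul_inv_smul]
  rw [transversalCocycle, mul_assoc]
  exact QuotientGroup.eq.mp h.symm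

lemma transversalCocycle_mul (g h : Q) (x : Q ⧸ E) :
    transversalCocycle g x * transversalCocycle h (g⁻¹ • x) = transversalCocycle (g * h) x := by
  simp only [transversalCocycle, mul_inv_rev, mul_smul]
  group

lemma transversalCocycle_mul_inv_out (g : Q) (x : Q ⧸ E) :
    transversalCocycle g x * (g⁻¹ • x).out⁻¹ = x.out⁻¹ * g := by
  simp only [transversalCocycle]
  group

theorem IsTwoCocycle.isTwoCoboundary_of_restrict_apply {f : Q → Q → Q ⧸ E → M}
    (hf : IsTwoCocycle f)
    (hE : IsTrivialTwoCoboundary fun a b : E => f a b ((1 : Q) : Q ⧸ E)) :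
    IsTwoCoboundary f := by
  obtain ⟨β, hβ⟩ := hE
  let F : Q → Q → M := fun a b => f a b ((1 : Q) : Q ⧸ E)
  have hF : ∀ g h x, f g h x = F (x.out⁻¹ * g) h - F x.out⁻¹ (g * h) + F x.out⁻¹ g := by
    intro g h x
    have h := hf.apply_inv_smul x.out⁻¹ g h ((1 : Q) : Q ⧸ E)
    rwa [inv_inv, out_smul_mk_one] at h
  have hFE : ∀ a ∈ E, ∀ b c, F a (b * c) = F (a * b) c - F b c + F a b := by
    intro a ha b c
    have h := hf.apply_inv_smul a b c ((1 : Q) : Q ⧸ E)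
    rw [smul_mk_one_of_mem (inv_mem ha)] at h
    linear_combination (norm := module) h
  -- `hF` recovers `f` from `F`; the witness is chosen so that, after `hFE` moves the
  -- transversal cocycles to the front, only `F` on `E × E` remains, where `β` applies.
  refine ⟨fun g x => F x.out⁻¹ g - F (transversalCocycle g x) (g⁻¹ • x).out⁻¹
    + β ⟨_, transversalCocycle_mem g x⟩, fun g h => funext fun x => ?_⟩
  have hz : (g * h)⁻¹ • x = h⁻¹ • g⁻¹ • x := by rw [mul_inv_rev, mul_smul]
  have hε : (⟨_, transversalCocycle_mem g x⟩ * ⟨_, transversalCocycle_mem h (g⁻¹ • x)⟩ : E)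
      = ⟨_, transversalCocycle_mem (g * h) x⟩ := Subtype.ext (transversalCocycle_mul g h x)
  have h₀ := hF g h x
  have h₁ := hFE _ (transversalCocycle_mem g x) (g⁻¹ • x).out⁻¹ h
  have h₂ := hFE _ (transversalCocycle_mem g x) (transversalCocycle h (g⁻¹ • x))
    (h⁻¹ • g⁻¹ • x).out⁻¹
  have h₃ := hβ ⟨_, transversalCocycle_mem g x⟩ ⟨_, transversalCocycle_mem h (g⁻¹ • x)⟩
  rw [transversalCocycle_mul_inv_out] at h₁ h₂
  rw [transversalCocycle_mul] at h₂
  rw [hε] at h₃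
  simp only [Pi.add_apply, Pi.sub_apply, funAction_smul_apply, hz]
  linear_combination (norm := module) h₀ - h₁ + h₂ + h₃

end Shapiro

/-- Let `Q` be a finite group, `E ≤ Q` a subgroup, and `ℤ[Q/E]` the
permutation module on the cosets `Q/E` (realized as `ℤ`-valued functions on `Q/E`, with
`Q` acting by translation).  If a class in `H²(Q, ℤ[Q/E])` restricts to zero on every
cyclic subgroup of `Q` then it is zero, i.e. `Ш²_ω(Q, ℤ[Q/E]) = 0`.  (Expressed via
cocycles: a 2-cocycle whose restriction to every cyclic subgroup is a coboundary is
itself a coboundary.) -/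
theorem stmt17 (Q : Type) [Group Q] [Finite Q] (E : Subgroup Q)
    (f : Q → Q → ((Q ⧸ E) → ℤ)) (hf : IsTwoCocycle f)
    (hres : ∀ C : Subgroup Q, IsCyclic ↥C →
      IsTwoCoboundary (fun a b : ↥C => f ↑a ↑b)) :
    IsTwoCoboundary f := by
  have hfix : ∀ a ∈ E, a • ((1 : Q) : Q ⧸ E) = ((1 : Q) : Q ⧸ E) := fun _ => smul_mk_one_of_mem
  refine hf.isTwoCoboundary_of_restrict_apply <|
    (hf.isTrivialTwoCocycle_restrict_apply hfix).isTrivialTwoCoboundary fun C _ => ?_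
  have hcyc : IsCyclic (C.map E.subtype) :=
    isCyclic_of_surjective _ (E.subtype.subgroupMap_surjective C)
  have hfixC : ∀ g : C.map E.subtype, g • ((1 : Q) : Q ⧸ E) = ((1 : Q) : Q ⧸ E) :=
    fun g => hfix g (Subgroup.map_subtype_le C g.2)
  exact ((hres _ hcyc).isTrivialTwoCoboundary_apply hfixC).comp (E.subtype.subgroupMap C)

end Normic
end
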